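/- arXiv:1810.09223 — 9 statements merged into one kernel-verified Lean document; each statement's English description precedes it below -/
import Mathlib

section
/- Let R > 0 and let Π be a measurable real-valued function on D = {(x,y) ∈ ℝ² : 0 ≤ x ≤ y}. Assume there exist α ∈ (0, 1/2) and a constant c > 0 such that |Π(x,y)| ≤ c·((x/y)^{2α} + (y/x)^{2α})/(x−y)² for all y > x ≥ R. Then ∫∫_{{(x,y) : R ≤ x ≤ y}} |φ^{(R,T)}(x) − φ^{(R,T)}(y)|² · |Π(x,y)| dx dy → 0 as T → ∞. -/
open MeasureTheory Filter

/-- The cutoff function `φ^{(R,T)}`: equal to `1` on `(-∞, R]`, to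
`1 - log(x-R+1)/log(T-R+1)` on `[R, T]`, and to `0` on `[T, ∞)`. -/
noncomputable def phi (R T x : ℝ) : ℝ :=
  if x ≤ R then 1
  else if x ≤ T then 1 - Real.log (x - R + 1) / Real.log (T - R + 1)
  else 0

/-!
Write `u = x - R + 1`, `v = y - R + 1` and `L = log (T - R + 1)`. Since
`φ = 1 - min (log u) L / L` on `[R, ∞)`, we get `|φ x - φ y| ≤ log (v / u) / L`, and both values
vanish once `x > T`. With the bound on `Π` and `y / x ≤ (1 + R)² / R · v / u`, the integrand is
dominated for `R ≤ x ≤ T` by `C / (L² u²) · h (v / u)`, where `h t = log² t · t^{2α} / (t - 1)²`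
is integrable on `(1, ∞)` precisely because `2α < 1`. Integrating in `y` gives `C ∫h / (L² u)`,
and `∫_R^T du / u = L`, so the whole integral is `O(1 / L)`.
-/

open Set Real

noncomputable def logRatioKernel (β t : ℝ) : ℝ := log t ^ 2 * t ^ β / (t - 1) ^ 2

section Kernel

variable {β t : ℝ}

theorem logRatioKernel_nonneg (β : ℝ) (ht : 0 ≤ t) : 0 ≤ logRatioKernel β t := by
  unfold logRatioKernel; positivity

theorem measurable_logRatioKernel (β : ℝ) : Measurable (logRatioKernel β) := by
  unfold logRatioKernel; fun_prop

theorem logRatioKernel_le_two (hβ : β ≤ 1) (ht : t ∈ Ioc 1 2) : logRatioKernel β t ≤ 2 := by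
  obtain ⟨h1, h2⟩ := ht
  have hlog : log t ^ 2 ≤ (t - 1) ^ 2 :=
    pow_le_pow_left₀ (log_nonneg h1.le) (log_le_sub_one_of_pos (by linarith)) 2
  have hpow : t ^ β ≤ 2 := (rpow_le_rpow_of_exponent_le h1.le hβ).trans (by simpa using h2)
  rw [logRatioKernel, div_le_iff₀ (by nlinarith), mul_comm 2]
  exact mul_le_mul hlog hpow (rpow_nonneg (by linarith) β) (sq_nonneg _)

theorem logRatioKernel_le_rpow (hβ : β < 1) (ht : 2 ≤ t) :
    logRatioKernel β t ≤ 64 / (1 - β) ^ 2 * t ^ ((β - 3) / 2) := by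
  set δ := (1 - β) / 4
  have hδ : 0 < δ := by simp only [δ]; linarith
  have ht0 : 0 < t := by linarith
  have hlog : log t ^ 2 ≤ t ^ (2 * δ) / δ ^ 2 := by
    calc log t ^ 2 ≤ (t ^ δ / δ) ^ 2 :=
          pow_le_pow_left₀ (log_nonneg (by linarith)) (log_le_rpow_div ht0.le hδ) 2
      _ = t ^ (2 * δ) / δ ^ 2 := by rw [div_pow, ← rpow_natCast, ← rpow_mul ht0.le]; ring_nf
  have hden : t ^ 2 / 4 ≤ (t - 1) ^ 2 := by nlinarith
  calc logRatioKernel β t ≤ t ^ (2 * δ) / δ ^ 2 * t ^ β / (t ^ 2 / 4) := by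
        unfold logRatioKernel; gcongr
    _ = 64 / (1 - β) ^ 2 * t ^ ((β - 3) / 2) := by
        rw [show (β - 3) / 2 = 2 * δ + β - 2 by ring, rpow_sub ht0, rpow_add ht0, rpow_two]
        simp only [δ]
        field_simp
        ring

theorem integrableOn_logRatioKernel (hβ : β < 1) : IntegrableOn (logRatioKernel β) (Ioi 1) := by
  rw [← Ioc_union_Ioi_eq_Ioi one_le_two]
  refine IntegrableOn.union ?_ ?_
  · refine Measure.integrableOn_of_bounded (M := 2) measure_Ioc_lt_top.ne
      (measurable_logRatioKernel β).aestronglyMeasurable ?_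
    filter_upwards [ae_restrict_mem measurableSet_Ioc] with t ht
    rw [norm_of_nonneg (logRatioKernel_nonneg β (by linarith [ht.1]))]
    exact logRatioKernel_le_two hβ.le ht
  · have hdom := (integrableOn_Ioi_rpow_of_lt (by linarith : (β - 3) / 2 < -1) two_pos).const_mul
      (64 / (1 - β) ^ 2)
    refine Integrable.mono' hdom (measurable_logRatioKernel β).aestronglyMeasurable ?_
    filter_upwards [ae_restrict_mem measurableSet_Ioi] with t (ht : 2 < t)
    rw [norm_of_nonneg (logRatioKernel_nonneg β (by linarith))]
    exact logRatioKernel_le_rpow hβ ht.le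

end Kernel

section ChangeOfVariables

variable {f : ℝ → ℝ} {a x : ℝ}

theorem integrableOn_Ioi_comp_sub_div (hf : IntegrableOn f (Ioi 1)) (hax : a < x) :
    IntegrableOn (fun y => f ((y - a) / (x - a))) (Ioi x) := by
  have hu : 0 < x - a := sub_pos.mpr hax
  have hscaled : IntegrableOn (fun z => f ((x - a)⁻¹ * z)) (Ioi (x - a)) := by
    rwa [integrableOn_Ioi_comp_mul_left_iff _ _ (inv_pos.mpr hu), inv_mul_cancel₀ hu.ne']
  have := ((measurePreserving_sub_right volume a).integrableOn_comp_preimage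
    (measurableEmbedding_subRight a)).mpr hscaled
  simpa [preimage_sub_const_Ioi, div_eq_inv_mul, Function.comp_def] using this

theorem integral_Ioi_comp_sub_div (f : ℝ → ℝ) (hax : a < x) :
    ∫ y in Ioi x, f ((y - a) / (x - a)) = (x - a) * ∫ t in Ioi 1, f t := by
  have hu : 0 < x - a := sub_pos.mpr hax
  have htrans := (measurePreserving_sub_right volume a).setIntegral_preimage_emb
    (measurableEmbedding_subRight a) (fun z => f ((x - a)⁻¹ * z)) (Ioi (x - a))
  rw [preimage_sub_const_Ioi, sub_add_cancel] at htrans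
  simp_rw [div_eq_inv_mul, htrans]
  rw [integral_comp_mul_left_Ioi _ _ (inv_pos.mpr hu), inv_mul_cancel₀ hu.ne', inv_inv,
    smul_eq_mul]

end ChangeOfVariables

theorem integral_Icc_inv_sub_add_one {a b : ℝ} (hab : a ≤ b) :
    ∫ x in Icc a b, (x - a + 1)⁻¹ = log (b - a + 1) := by
  have hshift : ∀ x : ℝ, x - a + 1 = x - (a - 1) := fun x => by ring
  rw [integral_Icc_eq_integral_Ioc, ← intervalIntegral.integral_of_le hab]
  simp_rw [hshift]
  rw [intervalIntegral.integral_comp_sub_right (fun x => x⁻¹),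
    integral_inv_of_pos (by linarith) (by linarith)]
  congr 1
  ring

section IteratedBound

variable {F : ℝ → ℝ → ℝ} {R T M β : ℝ}

theorem lintegral_indicator_fiber_le (hβ : β < 1) (hM : 0 ≤ M)
    (hle : ∀ x y, R ≤ x → x < y →
      F x y ≤ M / (x - R + 1) ^ 2 * logRatioKernel β ((y - R + 1) / (x - R + 1)))
    (hzero : ∀ x y, T < x → x ≤ y → F x y = 0) (x : ℝ) :
    ∫⁻ y, {p : ℝ × ℝ | R ≤ p.1 ∧ p.1 ≤ p.2}.indicator (fun p => ENNReal.ofReal (F p.1 p.2)) (x, y)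
      ≤ (Icc R T).indicator
          (fun x => ENNReal.ofReal (M * (∫ t in Ioi 1, logRatioKernel β t) * (x - R + 1)⁻¹)) x := by
  by_cases hxR : R ≤ x
  swap
  · simp [indicator, hxR]
  by_cases hTx : T < x
  · have hvanish : ∀ y, {p : ℝ × ℝ | R ≤ p.1 ∧ p.1 ≤ p.2}.indicator
        (fun p => ENNReal.ofReal (F p.1 p.2)) (x, y) = 0 := fun y => by
      by_cases hxy : x ≤ y <;> simp [indicator, hxy, hzero x y hTx]
    simp [hvanish]
  rw [indicator_of_mem (show x ∈ Icc R T from ⟨hxR, not_lt.mp hTx⟩)]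
  have hshift : ∀ z : ℝ, z - R + 1 = z - (R - 1) := fun z => by ring
  have hax : R - 1 < x := by linarith
  calc ∫⁻ y, {p : ℝ × ℝ | R ≤ p.1 ∧ p.1 ≤ p.2}.indicator
          (fun p => ENNReal.ofReal (F p.1 p.2)) (x, y)
        = ∫⁻ y in Ioi x, ENNReal.ofReal (F x y) := by
          rw [setLIntegral_congr Ioi_ae_eq_Ici, ← lintegral_indicator measurableSet_Ici]
          congr 1
          funext y
          simp [indicator, hxR]
    _ ≤ ∫⁻ y in Ioi x,
          ENNReal.ofReal (M / (x - R + 1) ^ 2 * logRatioKernel β ((y - R + 1) / (x - R + 1))) :=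
          setLIntegral_mono' measurableSet_Ioi fun y hy => ENNReal.ofReal_le_ofReal (hle x y hxR hy)
    _ = ENNReal.ofReal (M * (∫ t in Ioi 1, logRatioKernel β t) * (x - R + 1)⁻¹) := by
          simp_rw [hshift]
          rw [← ofReal_integral_eq_lintegral_ofReal
              (((integrableOn_Ioi_comp_sub_div (integrableOn_logRatioKernel hβ) hax)).const_mul _)
              (ae_restrict_of_forall_mem measurableSet_Ioi fun y (hy : x < y) =>
                mul_nonneg (by positivity) (logRatioKernel_nonneg β (div_nonneg (by linarith)
                  (by linarith)))),
            integral_const_mul, integral_Ioi_comp_sub_div _ hax]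
          congr 1
          field_simp

theorem setIntegral_le_of_le_logRatioKernel (hβ : β < 1) (hRT : R ≤ T) (hM : 0 ≤ M)
    (hF : ∀ x y, 0 ≤ F x y)
    (hle : ∀ x y, R ≤ x → x < y →
      F x y ≤ M / (x - R + 1) ^ 2 * logRatioKernel β ((y - R + 1) / (x - R + 1)))
    (hzero : ∀ x y, T < x → x ≤ y → F x y = 0) :
    ∫ p in {p : ℝ × ℝ | R ≤ p.1 ∧ p.1 ≤ p.2}, F p.1 p.2
      ≤ M * (∫ t in Ioi 1, logRatioKernel β t) * log (T - R + 1) := by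
  set S := {p : ℝ × ℝ | R ≤ p.1 ∧ p.1 ≤ p.2}
  set A := ∫ t in Ioi 1, logRatioKernel β t
  have hS : MeasurableSet S :=
    (measurableSet_le measurable_const measurable_fst).inter
      (measurableSet_le measurable_fst measurable_snd)
  have hA : 0 ≤ A := setIntegral_nonneg measurableSet_Ioi fun t (ht : 1 < t) =>
    logRatioKernel_nonneg β (by linarith)
  have hlog : 0 ≤ log (T - R + 1) := log_nonneg (by linarith)
  have hlint : ∫⁻ p in S, ENNReal.ofReal (F p.1 p.2) ≤ ENNReal.ofReal (M * A * log (T - R + 1)) :=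
    calc ∫⁻ p in S, ENNReal.ofReal (F p.1 p.2)
        = ∫⁻ p, S.indicator (fun p => ENNReal.ofReal (F p.1 p.2)) p :=
          (lintegral_indicator hS _).symm
      _ ≤ ∫⁻ x, ∫⁻ y, S.indicator (fun p => ENNReal.ofReal (F p.1 p.2)) (x, y) :=
          lintegral_prod_le _
      _ ≤ ∫⁻ x, (Icc R T).indicator (fun x => ENNReal.ofReal (M * A * (x - R + 1)⁻¹)) x :=
          lintegral_mono (lintegral_indicator_fiber_le hβ hM hle hzero)
      _ = ENNReal.ofReal (∫ x in Icc R T, M * A * (x - R + 1)⁻¹) := by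
          rw [lintegral_indicator measurableSet_Icc, ofReal_integral_eq_lintegral_ofReal]
          · refine ContinuousOn.integrableOn_Icc (continuousOn_const.mul (ContinuousOn.inv₀
              (by fun_prop) fun x hx => ?_))
            linarith [hx.1]
          · exact ae_restrict_of_forall_mem measurableSet_Icc fun x hx =>
              mul_nonneg (mul_nonneg hM hA) (inv_nonneg.mpr (by linarith [hx.1]))
      _ = ENNReal.ofReal (M * A * log (T - R + 1)) := by
          rw [integral_const_mul, integral_Icc_inv_sub_add_one hRT]
  -- Passing through `∫⁻` (here and in `lintegral_prod_le`) needs no measurability of `F`.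
  calc ∫ p in S, F p.1 p.2 ≤ ‖∫ p in S, F p.1 p.2‖ := le_norm_self _
    _ ≤ (∫⁻ p in S, ENNReal.ofReal ‖F p.1 p.2‖).toReal := norm_integral_le_lintegral_norm _
    _ ≤ M * A * log (T - R + 1) := by
        simp_rw [norm_of_nonneg (hF _ _)]
        exact ENNReal.toReal_le_of_le_ofReal (by positivity) hlint

end IteratedBound

section Cutoff

variable {R T x y : ℝ}

theorem phi_eq_one_sub_min (hRT : R < T) (hx : R ≤ x) :
    phi R T x = 1 - min (log (x - R + 1)) (log (T - R + 1)) / log (T - R + 1) := by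
  have hL : 0 < log (T - R + 1) := log_pos (by linarith)
  unfold phi
  split_ifs with h₁ h₂
  · simp [le_antisymm h₁ hx, hL.le]
  · rw [min_eq_left (log_le_log (by linarith) (by linarith))]
  · rw [min_eq_right (log_le_log (by linarith) (by linarith)), div_self hL.ne', sub_self]

theorem phi_eq_zero (hRT : R < T) (hx : T < x) : phi R T x = 0 := by
  rw [phi, if_neg (by linarith), if_neg (by linarith)]

theorem abs_phi_sub_phi_le (hRT : R < T) (hx : R ≤ x) (hxy : x ≤ y) :
    |phi R T x - phi R T y| ≤ log ((y - R + 1) / (x - R + 1)) / log (T - R + 1) := by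
  have hL : 0 < log (T - R + 1) := log_pos (by linarith)
  have hlog : log (x - R + 1) ≤ log (y - R + 1) := log_le_log (by linarith) (by linarith)
  rw [phi_eq_one_sub_min hRT hx, phi_eq_one_sub_min hRT (hx.trans hxy), sub_sub_sub_cancel_left,
    ← sub_div, abs_div, abs_of_pos hL, log_div (by linarith) (by linarith)]
  gcongr
  calc _ ≤ max |log (y - R + 1) - log (x - R + 1)| |log (T - R + 1) - log (T - R + 1)| :=
        abs_min_sub_min_le_max _ _ _ _
    _ = log (y - R + 1) - log (x - R + 1) := by
        rw [sub_self, abs_zero, max_eq_left (abs_nonneg _), abs_of_nonneg (sub_nonneg.mpr hlog)]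

theorem div_le_mul_div_sub_add_one (hR : 0 < R) (hx : R ≤ x) (hxy : x ≤ y) :
    y / x ≤ (1 + R) ^ 2 / R * ((y - R + 1) / (x - R + 1)) := by
  have hy : y ≤ (1 + R) * (y - R + 1) := by nlinarith
  have hu : R * (x - R + 1) ≤ (1 + R) * x := by nlinarith
  rw [div_mul_div_comm, div_le_div_iff₀ (by linarith) (by nlinarith)]
  calc y * (R * (x - R + 1)) ≤ (1 + R) * (y - R + 1) * ((1 + R) * x) :=
        mul_le_mul hy hu (by nlinarith) (by nlinarith)
    _ = (1 + R) ^ 2 * (y - R + 1) * x := by ring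

theorem rpow_div_add_rpow_div_le {β : ℝ} (hR : 0 < R) (hβ : 0 ≤ β) (hx : R ≤ x) (hxy : x ≤ y) :
    (x / y) ^ β + (y / x) ^ β ≤ 2 * ((1 + R) ^ 2 / R) ^ β * ((y - R + 1) / (x - R + 1)) ^ β := by
  have hx0 : 0 < x := hR.trans_le hx
  have hy0 : 0 < y := hx0.trans_le hxy
  have hsmall : (x / y) ^ β ≤ 1 :=
    rpow_le_one (by positivity) (div_le_one_of_le₀ hxy (by linarith)) hβ
  have hlarge : 1 ≤ (y / x) ^ β := one_le_rpow ((one_le_div hx0).mpr hxy) hβ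
  have hcompare : (y / x) ^ β ≤ ((1 + R) ^ 2 / R) ^ β * ((y - R + 1) / (x - R + 1)) ^ β := by
    rw [← mul_rpow (by positivity) (div_nonneg (by linarith) (by linarith))]
    exact rpow_le_rpow (by positivity) (div_le_mul_div_sub_add_one hR hx hxy) hβ
  linarith

theorem sq_abs_phi_sub_mul_abs_le {β c P : ℝ} (hR : 0 < R) (hRT : R < T) (hβ : 0 ≤ β) (hc : 0 ≤ c)
    (hx : R ≤ x) (hxy : x < y)
    (hP : |P| ≤ c * ((x / y) ^ β + (y / x) ^ β) / (x - y) ^ 2) :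
    |phi R T x - phi R T y| ^ 2 * |P|
      ≤ 2 * c * ((1 + R) ^ 2 / R) ^ β / log (T - R + 1) ^ 2 / (x - R + 1) ^ 2
        * logRatioKernel β ((y - R + 1) / (x - R + 1)) := by
  set u := x - R + 1
  set t := (y - R + 1) / u
  set L := log (T - R + 1)
  have hu : 0 < u := by simp only [u]; linarith
  have hL : 0 < L := log_pos (by linarith)
  have ht : 1 < t := (one_lt_div hu).mpr (by simp only [u]; linarith)
  have hdiff : (x - y) ^ 2 = u ^ 2 * (t - 1) ^ 2 := by
    have hut : u * (t - 1) = y - x := by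
      simp only [t]; field_simp; simp only [u]; ring
    rw [← mul_pow, hut]; ring
  have hphi : |phi R T x - phi R T y| ^ 2 ≤ (log t / L) ^ 2 :=
    pow_le_pow_left₀ (abs_nonneg _) (abs_phi_sub_phi_le hRT hx hxy.le) 2
  have hP' : |P| ≤ c * (2 * ((1 + R) ^ 2 / R) ^ β * t ^ β) / (x - y) ^ 2 :=
    hP.trans (by gcongr; exact rpow_div_add_rpow_div_le hR hβ hx hxy.le)
  calc |phi R T x - phi R T y| ^ 2 * |P|
      ≤ (log t / L) ^ 2 * (c * (2 * ((1 + R) ^ 2 / R) ^ β * t ^ β) / (x - y) ^ 2) :=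
        mul_le_mul hphi hP' (abs_nonneg _) (by positivity)
    _ = 2 * c * ((1 + R) ^ 2 / R) ^ β / L ^ 2 / u ^ 2 * logRatioKernel β t := by
        have : t - 1 ≠ 0 := by linarith
        rw [hdiff, logRatioKernel]
        field_simp

end Cutoff

theorem stmt_0_general (R : ℝ) (hR : 0 < R) (Pi : ℝ → ℝ → ℝ)
    (α c : ℝ) (hα0 : 0 < α) (hα : α < 1 / 2) (hc : 0 < c)
    (hbound : ∀ x y : ℝ, R ≤ x → x < y →
      |Pi x y| ≤ c * ((x / y) ^ (2 * α) + (y / x) ^ (2 * α)) / (x - y) ^ 2) :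
    Tendsto (fun T : ℝ =>
        ∫ p in {p : ℝ × ℝ | R ≤ p.1 ∧ p.1 ≤ p.2},
          |phi R T p.1 - phi R T p.2| ^ 2 * |Pi p.1 p.2|)
      atTop (nhds 0) := by
  set C := 2 * c * ((1 + R) ^ 2 / R) ^ (2 * α)
  set A := ∫ t in Ioi 1, logRatioKernel (2 * α) t
  have hdecay : Tendsto (fun T => C * A / log (T - R + 1)) atTop (nhds 0) :=
    tendsto_const_nhds.div_atTop <| tendsto_log_atTop.comp <|
      tendsto_atTop_add_const_right _ 1 (tendsto_atTop_add_const_right _ (-R) tendsto_id)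
  refine squeeze_zero' (Eventually.of_forall fun T => integral_nonneg fun p => by positivity)
    ?_ hdecay
  filter_upwards [eventually_gt_atTop R] with T hRT
  have hL : 0 < log (T - R + 1) := log_pos (by linarith)
  calc _ ≤ C / log (T - R + 1) ^ 2 * A * log (T - R + 1) :=
        setIntegral_le_of_le_logRatioKernel (by linarith) hRT.le (by positivity)
          (fun _ _ => by positivity)
          (fun x y hx hxy => sq_abs_phi_sub_mul_abs_le hR hRT (by positivity) hc.le hx hxy
            (hbound x y hx hxy))
          (fun x y hTx hxy => by rw [phi_eq_zero hRT hTx, phi_eq_zero hRT (hTx.trans_le hxy)]; simp)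
    _ = C * A / log (T - R + 1) := by field_simp

theorem stmt_0 (R : ℝ) (hR : 0 < R) (Pi : ℝ → ℝ → ℝ)
    (hmeas : Measurable fun p : ℝ × ℝ => Pi p.1 p.2)
    (α c : ℝ) (hα0 : 0 < α) (hα : α < 1 / 2) (hc : 0 < c)
    (hbound : ∀ x y : ℝ, R ≤ x → x < y →
      |Pi x y| ≤ c * ((x / y) ^ (2 * α) + (y / x) ^ (2 * α)) / (x - y) ^ 2) :
    Tendsto (fun T : ℝ =>
        ∫ p in {p : ℝ × ℝ | R ≤ p.1 ∧ p.1 ≤ p.2},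
          |phi R T p.1 - phi R T p.2| ^ 2 * |Pi p.1 p.2|)
      atTop (nhds 0) :=
  stmt_0_general R hR Pi α c hα0 hα hc hbound
end

section
/- Let R > 0 and let Π be a measurable real-valued function on D = {(x,y) ∈ ℝ² : 0 ≤ x ≤ y}. Assume there exist ε > 0 and a constant c > 0 such that ∫_0^R |Π(x,y)| dx ≤ c / y^{1+ε} for all y ≥ R. Then ∫∫_{{(x,y) : 0 ≤ x < R ≤ y}} |φ^{(R,T)}(x) − φ^{(R,T)}(y)|² · |Π(x,y)| dx dy → 0 as T → ∞. -/
/-!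
For `x ≤ R` the cutoff is `1`, so on `D_{<R}` the integrand is `(1 - φ(y))² |Π(x,y)|`, and
`0 ≤ 1 - φ(y) ≤ log (y - R + 1) / log (T - R + 1)`. Hence the integral is at most
`log (T - R + 1)⁻² ∫∫ log (y - R + 1)² |Π(x,y)|`, and the last integral is finite because
`log (y - R + 1)² ≲ y^{ε/2}` while `∫₀^R |Π(x,y)| dx ≤ c / y^{1+ε}`.
-/

open MeasureTheory Filter

open Set Real

lemma phi_of_le {R T x : ℝ} (h : x ≤ R) : phi R T x = 1 := if_pos h

lemma one_sub_phi_pos {R T y : ℝ} (hRT : R < T) (hy : R < y) : 0 < 1 - phi R T y := by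
  have hL : 0 < log (T - R + 1) := log_pos (by linarith)
  unfold phi
  split_ifs with h₁ h₂
  · linarith
  · have := div_pos (log_pos (by linarith : 1 < y - R + 1)) hL
    linarith
  · norm_num

lemma sq_one_sub_phi_le {R T : ℝ} (hRT : R < T) (y : ℝ) :
    (1 - phi R T y) ^ 2 ≤ (log (y - R + 1) / log (T - R + 1)) ^ 2 := by
  have hL : 0 < log (T - R + 1) := log_pos (by linarith)
  unfold phi
  split_ifs with h₁ h₂
  · rw [sub_self, zero_pow two_ne_zero]
    positivity
  · rw [sub_sub_cancel]
  · rw [not_le] at h₁ h₂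
    have hlog : log (T - R + 1) ≤ log (y - R + 1) := log_le_log (by linarith) (by linarith)
    rw [sub_zero, one_pow]
    exact one_le_pow₀ ((one_le_div hL).2 hlog)

lemma log_sq_le_rpow {a x : ℝ} (ha : 0 < a) (hx : 1 ≤ x) :
    log x ^ 2 ≤ (2 / a) ^ 2 * x ^ a := by
  have hsq : (x ^ (a / 2)) ^ 2 = x ^ a := by
    rw [← rpow_mul_natCast (by linarith)]
    ring_nf
  calc log x ^ 2 ≤ (x ^ (a / 2) / (a / 2)) ^ 2 :=
        pow_le_pow_left₀ (log_nonneg hx) (log_le_rpow_div (by linarith) (by linarith)) 2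
    _ = (2 / a) ^ 2 * x ^ a := by rw [← hsq]; field_simp

lemma integrableOn_log_sq_div_rpow {R ε : ℝ} (hR : 0 < R) (hε : 0 < ε) :
    IntegrableOn (fun y => log (y - R + 1) ^ 2 / y ^ (1 + ε)) (Ioi R) := by
  set K := (4 / ε) ^ 2 * (1 + 1 / R) ^ (ε / 2)
  refine ((integrableOn_Ioi_rpow_of_lt (by linarith : -(1 + ε / 2) < -1) hR).const_mul K).mono'
    (Measurable.aestronglyMeasurable (by fun_prop)) ?_
  filter_upwards [ae_restrict_mem measurableSet_Ioi] with y (hy : R < y)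
  have hy₀ : 0 < y := hR.trans hy
  have hshift : y - R + 1 ≤ (1 + 1 / R) * y := by
    have : 1 ≤ y / R := (one_le_div hR).2 hy.le
    linarith [show (1 + 1 / R) * y = y + y / R by ring]
  have hlog : log (y - R + 1) ^ 2 ≤ K * y ^ (ε / 2) := calc
    log (y - R + 1) ^ 2 ≤ (2 / (ε / 2)) ^ 2 * (y - R + 1) ^ (ε / 2) :=
        log_sq_le_rpow (by positivity) (by linarith)
    _ ≤ (4 / ε) ^ 2 * ((1 + 1 / R) * y) ^ (ε / 2) := by
        rw [show 2 / (ε / 2) = 4 / ε by ring]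
        gcongr
    _ = K * y ^ (ε / 2) := by rw [mul_rpow (by positivity) hy₀.le]; ring
  rw [norm_of_nonneg (by positivity), div_le_iff₀ (by positivity), mul_assoc,
    ← rpow_add hy₀, show -(1 + ε / 2) + (1 + ε) = ε / 2 by ring]
  exact hlog

lemma tendsto_inv_log_sub_add_one_sq (R : ℝ) :
    Tendsto (fun T => (log (T - R + 1))⁻¹ ^ 2) atTop (nhds 0) := by
  have hshift : Tendsto (fun T : ℝ => T - R + 1) atTop atTop :=
    (tendsto_atTop_add_const_right _ (1 - R) tendsto_id).congr fun T => by rw [id]; ring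
  simpa using (tendsto_inv_atTop_zero.comp (tendsto_log_atTop.comp hshift)).pow 2

lemma integral_one_sub_phi_sq_mul_le {R T : ℝ} (hRT : R < T) {μ : Measure (ℝ × ℝ)}
    {f : ℝ × ℝ → ℝ} (hf : ∀ p, 0 ≤ f p)
    (hG : Integrable (fun p => log (p.2 - R + 1) ^ 2 * f p) μ) :
    ∫ p, (1 - phi R T p.2) ^ 2 * f p ∂μ ≤
      (log (T - R + 1))⁻¹ ^ 2 * ∫ p, log (p.2 - R + 1) ^ 2 * f p ∂μ := by
  rw [← integral_const_mul]
  refine integral_mono_of_nonneg (ae_of_all _ fun p => mul_nonneg (sq_nonneg _) (hf p))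
    (hG.const_mul _) (ae_of_all _ fun p => ?_)
  calc (1 - phi R T p.2) ^ 2 * f p ≤ (log (p.2 - R + 1) / log (T - R + 1)) ^ 2 * f p :=
        mul_le_mul_of_nonneg_right (sq_one_sub_phi_le hRT _) (hf p)
    _ = (log (T - R + 1))⁻¹ ^ 2 * (log (p.2 - R + 1) ^ 2 * f p) := by ring

section WeightedProd

variable {α β : Type*} [MeasurableSpace α] [MeasurableSpace β] {μ : Measure α} {ν : Measure β}
  [SFinite μ] [SFinite ν] {w : β → ℝ} {f : α → β → ℝ}

lemma ae_integrable_of_integrable_weight_mul (hw : ∀ᵐ y ∂ν, w y ≠ 0)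
    (hf : Integrable (fun p : α × β => w p.2 * f p.1 p.2) (μ.prod ν)) :
    ∀ᵐ y ∂ν, Integrable (fun x => f x y) μ := by
  filter_upwards [hf.prod_left_ae, hw] with y hy hwy
  exact (integrable_const_mul_iff hwy.isUnit _).mp hy

lemma integrable_weight_mul_of_integral_norm_le {g : β → ℝ} (hw : ∀ y, 0 ≤ w y)
    (hmeas : AEStronglyMeasurable (fun p : α × β => w p.2 * f p.1 p.2) (μ.prod ν))
    (hf : ∀ᵐ y ∂ν, Integrable (fun x => f x y) μ)
    (hle : ∀ᵐ y ∂ν, ∫ x, ‖f x y‖ ∂μ ≤ g y) (hg : Integrable (fun y => w y * g y) ν) :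
    Integrable (fun p : α × β => w p.2 * f p.1 p.2) (μ.prod ν) := by
  refine (integrable_prod_iff' hmeas).2
    ⟨?_, hg.mono' hmeas.prod_swap.norm.integral_prod_right' ?_⟩
  · filter_upwards [hf] with y hy using hy.const_mul (w y)
  · filter_upwards [hle] with y hy
    simp only [norm_mul, norm_of_nonneg (hw _), integral_const_mul]
    rw [norm_of_nonneg (by positivity)]
    exact mul_le_mul_of_nonneg_left hy (hw y)

end WeightedProd

lemma integral_region_eq_integral_prod (R T : ℝ) (Pi : ℝ → ℝ → ℝ) :
    ∫ p in {p : ℝ × ℝ | 0 ≤ p.1 ∧ p.1 < R ∧ R ≤ p.2},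
        |phi R T p.1 - phi R T p.2| ^ 2 * |Pi p.1 p.2| =
      ∫ p, (1 - phi R T p.2) ^ 2 * |Pi p.1 p.2|
        ∂(volume.restrict (Ioc 0 R)).prod (volume.restrict (Ioi R)) := by
  have hregion : {p : ℝ × ℝ | 0 ≤ p.1 ∧ p.1 < R ∧ R ≤ p.2} = Ico 0 R ×ˢ Ici R := by
    ext p
    simp [and_assoc]
  rw [hregion, Measure.volume_eq_prod, ← Measure.prod_restrict,
    Measure.restrict_congr_set Ico_ae_eq_Ioc, Measure.restrict_congr_set Ioi_ae_eq_Ici.symm]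
  refine integral_congr_ae ?_
  filter_upwards [Measure.quasiMeasurePreserving_fst.ae (ae_restrict_mem measurableSet_Ioc)]
    with p hp
  rw [phi_of_le hp.2, sq_abs]

lemma integrable_log_sq_mul_abs {R ε c : ℝ} (hR : 0 < R) (hε : 0 < ε) {Pi : ℝ → ℝ → ℝ}
    (hmeas : Measurable fun p : ℝ × ℝ => Pi p.1 p.2)
    (hbound : ∀ y : ℝ, R ≤ y → (∫ x in (0:ℝ)..R, |Pi x y|) ≤ c / y ^ (1 + ε))
    (hslices : ∀ᵐ y ∂volume.restrict (Ioi R), Integrable (fun x => |Pi x y|)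
      (volume.restrict (Ioc 0 R))) :
    Integrable (fun p : ℝ × ℝ => log (p.2 - R + 1) ^ 2 * |Pi p.1 p.2|)
      ((volume.restrict (Ioc 0 R)).prod (volume.restrict (Ioi R))) := by
  refine integrable_weight_mul_of_integral_norm_le (w := fun y => log (y - R + 1) ^ 2)
    (f := fun x y => |Pi x y|) (g := fun y => c / y ^ (1 + ε)) (fun y => by positivity)
    (Measurable.aestronglyMeasurable (by fun_prop)) hslices ?_ ?_
  · filter_upwards [ae_restrict_mem measurableSet_Ioi] with y (hy : R < y)
    simp only [norm_abs_eq_norm, norm_eq_abs]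
    rw [← intervalIntegral.integral_of_le hR.le]
    exact hbound y hy.le
  · simpa only [mul_div_left_comm] using (integrableOn_log_sq_div_rpow hR hε).const_mul c

theorem stmt_1_general (R : ℝ) (hR : 0 < R) (Pi : ℝ → ℝ → ℝ)
    (hmeas : Measurable fun p : ℝ × ℝ => Pi p.1 p.2)
    (ε c : ℝ) (hε : 0 < ε)
    (hbound : ∀ y : ℝ, R ≤ y →
      (∫ x in (0:ℝ)..R, |Pi x y|) ≤ c / y ^ (1 + ε)) :
    Tendsto (fun T : ℝ =>
        ∫ p in {p : ℝ × ℝ | 0 ≤ p.1 ∧ p.1 < R ∧ R ≤ p.2},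
          |phi R T p.1 - phi R T p.2| ^ 2 * |Pi p.1 p.2|)
      atTop (nhds 0) := by
  simp_rw [integral_region_eq_integral_prod]
  by_cases hslices : ∀ᵐ y ∂volume.restrict (Ioi R), Integrable (fun x => |Pi x y|)
      (volume.restrict (Ioc 0 R))
  · have hG := integrable_log_sq_mul_abs hR hε hmeas hbound hslices
    refine squeeze_zero' (Eventually.of_forall fun T => integral_nonneg fun p => by positivity)
      ((eventually_gt_atTop R).mono fun T hT =>
        integral_one_sub_phi_sq_mul_le hT (fun p => abs_nonneg _) hG) ?_
    simpa using (tendsto_inv_log_sub_add_one_sq R).mul_const _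
  · -- Then no integrand is integrable, since the weight `(1 - φ y)²` vanishes only at `y ≤ R`,
    -- and the Bochner integral of a non-integrable function is `0`.
    refine tendsto_const_nhds.congr' ((eventually_gt_atTop R).mono fun T hT => ?_)
    have hweight : ∀ᵐ y ∂volume.restrict (Ioi R), (1 - phi R T y) ^ 2 ≠ 0 := by
      filter_upwards [ae_restrict_mem measurableSet_Ioi] with y hy
      exact pow_ne_zero 2 (one_sub_phi_pos hT hy).ne'
    exact (integral_undef fun h =>
      hslices (ae_integrable_of_integrable_weight_mul hweight h)).symm

theorem stmt_1 (R : ℝ) (hR : 0 < R) (Pi : ℝ → ℝ → ℝ)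
    (hmeas : Measurable fun p : ℝ × ℝ => Pi p.1 p.2)
    (ε c : ℝ) (hε : 0 < ε) (hc : 0 < c)
    (hbound : ∀ y : ℝ, R ≤ y →
      (∫ x in (0:ℝ)..R, |Pi x y|) ≤ c / y ^ (1 + ε)) :
    Tendsto (fun T : ℝ =>
        ∫ p in {p : ℝ × ℝ | 0 ≤ p.1 ∧ p.1 < R ∧ R ≤ p.2},
          |phi R T p.1 - phi R T p.2| ^ 2 * |Pi p.1 p.2|)
      atTop (nhds 0) :=
  stmt_1_general R hR Pi hmeas ε c hε hbound
end

section
/- Let K : ℝ × ℝ → ℝ be continuously differentiable with ∂₁K(x,y) = −∂₁K(y,x) for all x, y. Fix x ∈ ℝ and assume: the functions y ↦ K(x,y)·K(y,x) and y ↦ ∂₁K(x,y)·∫_x^y K(x,t) dt are Lebesgue integrable on ℝ; ∫_ℝ K(x,y)·K(y,x) dy = K(x,x) (projection/reproducing property); K(y,x) → 0 as y → ±∞; and K(y,x)·∫_x^y K(x,t) dt → 0 as y → ±∞. Then ∫_ℝ det𝕂₄(x,y) dy = (1/2)·K(x,x). -/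
/-!
Put `F y = ∫_x^y K(x,t) dt`. Skew-symmetry of `∂₁K` turns `∂₁K(x,y) F(y)` into
`K(x,y) K(y,x) - G'(y)` with `G(y) = K(y,x) F(y)`. Since `G` vanishes at `±∞`, `∫ G' = 0`, so
both terms of `det𝕂₄(x, ·)` integrate to `K(x,x)`, and the integral is `(1/4) · 2 K(x,x)`.
-/

open MeasureTheory Filter

theorem hasDerivAt_mul_intervalIntegral {f g : ℝ → ℝ} {a y : ℝ} (hf : DifferentiableAt ℝ f y)
    (hg : Continuous g) :
    HasDerivAt (fun y => f y * ∫ t in a..y, g t)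
      (deriv f y * (∫ t in a..y, g t) + f y * g y) y :=
  hf.hasDerivAt.mul <| intervalIntegral.integral_hasDerivAt_right (hg.intervalIntegrable a y)
    hg.stronglyMeasurable.stronglyMeasurableAtFilter hg.continuousAt

theorem integral_deriv_mul_intervalIntegral_add_eq_zero {f g : ℝ → ℝ} (a : ℝ)
    (hf : Differentiable ℝ f) (hg : Continuous g)
    (hint : Integrable fun y => deriv f y * (∫ t in a..y, g t) + f y * g y)
    (hbot : Tendsto (fun y => f y * ∫ t in a..y, g t) atBot (nhds 0))
    (htop : Tendsto (fun y => f y * ∫ t in a..y, g t) atTop (nhds 0)) :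
    ∫ y, (deriv f y * (∫ t in a..y, g t) + f y * g y) = 0 := by
  rw [integral_of_hasDerivAt_of_tendsto (fun y => hasDerivAt_mul_intervalIntegral (hf y) hg)
    hint hbot htop, sub_self]

theorem stmt_10_general (K : ℝ → ℝ → ℝ)
    (hK : ContDiff ℝ 1 fun p : ℝ × ℝ => K p.1 p.2)
    (hskew : ∀ x y : ℝ, deriv (fun t => K t y) x = - deriv (fun t => K t x) y)
    (x : ℝ)
    (hint1 : Integrable fun y => K x y * K y x)
    (hint2 : Integrable fun y => deriv (fun t => K t y) x * ∫ t in x..y, K x t)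
    (hproj : (∫ y : ℝ, K x y * K y x) = K x x)
    (hlim2 : Tendsto (fun y => K y x * ∫ t in x..y, K x t) atTop (nhds 0))
    (hlim2' : Tendsto (fun y => K y x * ∫ t in x..y, K x t) atBot (nhds 0)) :
    (∫ y : ℝ, (1/4) * (K x y * K y x + deriv (fun t => K t y) x * ∫ t in x..y, K x t))
      = (1/2) * K x x := by
  have hrow : Continuous fun t => K x t := hK.continuous.comp (Continuous.prodMk_right x)
  have hcol : Differentiable ℝ fun y => K y x :=
    (hK.differentiable one_ne_zero).comp (differentiable_id.prodMk (differentiable_const x))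
  have hpt : ∀ y, deriv (fun t => K t y) x * (∫ t in x..y, K x t) = K x y * K y x -
      (deriv (fun t => K t x) y * (∫ t in x..y, K x t) + K y x * K x y) := fun y => by
    rw [hskew x y]; ring
  have hderiv_int : Integrable fun y =>
      deriv (fun t => K t x) y * (∫ t in x..y, K x t) + K y x * K x y :=
    (hint1.sub hint2).congr (ae_of_all _ fun y => by rw [Pi.sub_apply, hpt y]; ring)
  have hsecond : (∫ y, deriv (fun t => K t y) x * ∫ t in x..y, K x t) = K x x := by
    simp only [hpt]
    rw [integral_sub hint1 hderiv_int, hproj,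
      integral_deriv_mul_intervalIntegral_add_eq_zero x hcol hrow hderiv_int hlim2' hlim2, sub_zero]
  rw [integral_const_mul, integral_add hint1 hint2, hproj, hsecond]
  ring

theorem stmt_10 (K : ℝ → ℝ → ℝ)
    (hK : ContDiff ℝ 1 fun p : ℝ × ℝ => K p.1 p.2)
    (hskew : ∀ x y : ℝ, deriv (fun t => K t y) x = - deriv (fun t => K t x) y)
    (x : ℝ)
    (hint1 : Integrable fun y => K x y * K y x)
    (hint2 : Integrable fun y => deriv (fun t => K t y) x * ∫ t in x..y, K x t)
    (hproj : (∫ y : ℝ, K x y * K y x) = K x x)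
    (hlim1 : Tendsto (fun y => K y x) atTop (nhds 0))
    (hlim1' : Tendsto (fun y => K y x) atBot (nhds 0))
    (hlim2 : Tendsto (fun y => K y x * ∫ t in x..y, K x t) atTop (nhds 0))
    (hlim2' : Tendsto (fun y => K y x * ∫ t in x..y, K x t) atBot (nhds 0)) :
    (∫ y : ℝ, (1/4) * (K x y * K y x + deriv (fun t => K t y) x * ∫ t in x..y, K x t))
      = (1/2) * K x x :=
  stmt_10_general K hK hskew x hint1 hint2 hproj hlim2 hlim2'
end

section
/- Let K : ℝ × ℝ → ℝ be continuously differentiable with ∂₁K(x,y) = −∂₁K(y,x) for all x, y. Fix x ∈ ℝ and assume: the functions y ↦ K(x,y)·K(y,x) and y ↦ ∂₁K(x,y)·∫_x^y K(x,t) dt are Lebesgue integrable on ℝ; ∫_ℝ K(x,y)·K(y,x) dy = K(x,x) (projection/reproducing property); K(y,x) → 0 as y → ±∞; and K(y,x)·∫_x^y K(x,t) dt → 0 as y → ±∞. Then ∫_ℝ det𝕂₁(x,y) dy = K(x,x), the integral of the sign term being understood as the sum of the improper integrals over (−∞, x] and [x, ∞). -/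
/-!
Write `g y = K(y,x)` and `F y = ∫_x^y K(x,t) dt`. Skew-symmetry of `∂₁K` says that
`y ↦ ∂₁K(x,y)` is `-g'`, so integrating `(g F)' = g' F + K(y,x) K(x,y)` over `ℝ` (the boundary
terms vanish by the decay of `g F`) gives `∫ ∂₁K(x,y) F(y) dy = ∫ K(x,y) K(y,x) dy = K(x,x)`.
The sign term integrates to `(g(-∞) - g(x))/2 + (g(∞) - g(x))/2 = -K(x,x)`, which leaves
`K(x,x) + K(x,x) - K(x,x)`.
-/

open MeasureTheory Filter Topology

theorem integral_deriv_mul_eq_neg_of_tendsto_zero {u u' v v' : ℝ → ℝ}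
    (hu : ∀ y, HasDerivAt u (u' y) y) (hv : ∀ y, HasDerivAt v (v' y) y)
    (hu'v : Integrable fun y => u' y * v y) (huv' : Integrable fun y => u y * v' y)
    (hbot : Tendsto (fun y => u y * v y) atBot (𝓝 0))
    (htop : Tendsto (fun y => u y * v y) atTop (𝓝 0)) :
    ∫ y, u' y * v y = -∫ y, u y * v' y := by
  have h := integral_of_hasDerivAt_of_tendsto (fun y => (hu y).mul (hv y)) (hu'v.add huv')
    hbot htop
  rw [integral_add hu'v huv', sub_zero] at h
  linarith

theorem integral_sign_sub_mul_of_le {a x : ℝ} (h : ℝ → ℝ) (ha : a ≤ x) :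
    ∫ y in a..x, Real.sign (x - y) * h y = ∫ y in a..x, h y := by
  rw [intervalIntegral.integral_of_le ha, intervalIntegral.integral_of_le ha,
    integral_Ioc_eq_integral_Ioo, integral_Ioc_eq_integral_Ioo]
  refine setIntegral_congr_fun measurableSet_Ioo fun y hy => ?_
  rw [Real.sign_of_pos (sub_pos.2 hy.2), one_mul]

theorem integral_sign_sub_mul_of_ge {x b : ℝ} (h : ℝ → ℝ) (hb : x ≤ b) :
    ∫ y in x..b, Real.sign (x - y) * h y = -∫ y in x..b, h y := by
  rw [intervalIntegral.integral_of_le hb, intervalIntegral.integral_of_le hb, ← integral_neg]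
  refine setIntegral_congr_fun measurableSet_Ioc fun y hy => ?_
  rw [Real.sign_of_neg (sub_neg.2 hy.1), neg_one_mul]

section SignIntegral

variable {f f' : ℝ → ℝ} {l : ℝ} (x : ℝ) (hf : ∀ y, HasDerivAt f (f' y) y) (hf' : Continuous f')
include hf hf'

theorem tendsto_integral_sign_sub_mul_atBot (hl : Tendsto f atBot (𝓝 l)) :
    Tendsto (fun a => ∫ y in a..x, Real.sign (x - y) * f' y) atBot (𝓝 (f x - l)) := by
  refine (tendsto_const_nhds.sub hl).congr' ?_
  filter_upwards [eventually_le_atBot x] with a ha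
  rw [integral_sign_sub_mul_of_le _ ha,
    intervalIntegral.integral_eq_sub_of_hasDerivAt (fun y _ => hf y) (hf'.intervalIntegrable a x)]

theorem tendsto_integral_sign_sub_mul_atTop (hl : Tendsto f atTop (𝓝 l)) :
    Tendsto (fun b => ∫ y in x..b, Real.sign (x - y) * f' y) atTop (𝓝 (f x - l)) := by
  refine (tendsto_const_nhds.sub hl).congr' ?_
  filter_upwards [eventually_ge_atTop x] with b hb
  rw [integral_sign_sub_mul_of_ge _ hb,
    intervalIntegral.integral_eq_sub_of_hasDerivAt (fun y _ => hf y) (hf'.intervalIntegrable x b),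
    neg_sub]

end SignIntegral

section SkewKernel

variable {K : ℝ → ℝ → ℝ} (hK : ContDiff ℝ 1 fun p : ℝ × ℝ => K p.1 p.2)
include hK

theorem contDiff_left_of_contDiff_uncurry (b : ℝ) : ContDiff ℝ 1 fun t => K t b :=
  hK.comp (contDiff_id.prodMk contDiff_const)

theorem continuous_right_of_contDiff_uncurry (a : ℝ) : Continuous fun t => K a t :=
  hK.continuous.comp (continuous_const.prodMk continuous_id)

variable (hskew : ∀ x y : ℝ, deriv (fun t => K t y) x = - deriv (fun t => K t x) y)
include hskew

theorem hasDerivAt_neg_left_of_skew (x y : ℝ) :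
    HasDerivAt (fun t => -K t x) (deriv (fun t => K t y) x) y := by
  rw [hskew]
  exact ((contDiff_left_of_contDiff_uncurry hK x).differentiable one_ne_zero y).hasDerivAt.neg

theorem continuous_deriv_left_of_skew (x : ℝ) :
    Continuous fun y => deriv (fun t => K t y) x := by
  simp_rw [hskew x]
  exact ((contDiff_left_of_contDiff_uncurry hK x).continuous_deriv le_rfl).neg

theorem integral_deriv_left_mul_primitive_of_skew {x : ℝ}
    (hint1 : Integrable fun y => K x y * K y x)
    (hint2 : Integrable fun y => deriv (fun t => K t y) x * ∫ t in x..y, K x t)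
    (hlim : Tendsto (fun y => K y x * ∫ t in x..y, K x t) atTop (𝓝 0))
    (hlim' : Tendsto (fun y => K y x * ∫ t in x..y, K x t) atBot (𝓝 0)) :
    ∫ y, deriv (fun t => K t y) x * (∫ t in x..y, K x t) = ∫ y, K x y * K y x := by
  have hF : ∀ y, HasDerivAt (fun y => ∫ t in x..y, K x t) (K x y) y :=
    ((continuous_right_of_contDiff_uncurry hK x).integral_hasStrictDerivAt x · |>.hasDerivAt)
  have hint1' : Integrable fun y => -K y x * K x y := by
    simpa only [neg_mul, mul_comm (K x _), Pi.neg_def] using hint1.neg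
  rw [integral_deriv_mul_eq_neg_of_tendsto_zero (hasDerivAt_neg_left_of_skew hK hskew x) hF hint2
    hint1' (by simpa only [neg_mul, neg_zero] using hlim'.neg)
    (by simpa only [neg_mul, neg_zero] using hlim.neg)]
  simp only [neg_mul, integral_neg, neg_neg, mul_comm (K _ x)]

end SkewKernel

theorem stmt_11 (K : ℝ → ℝ → ℝ)
    (hK : ContDiff ℝ 1 fun p : ℝ × ℝ => K p.1 p.2)
    (hskew : ∀ x y : ℝ, deriv (fun t => K t y) x = - deriv (fun t => K t x) y)
    (x : ℝ)
    (hint1 : Integrable fun y => K x y * K y x)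
    (hint2 : Integrable fun y => deriv (fun t => K t y) x * ∫ t in x..y, K x t)
    (hproj : (∫ y : ℝ, K x y * K y x) = K x x)
    (hlim1 : Tendsto (fun y => K y x) atTop (nhds 0))
    (hlim1' : Tendsto (fun y => K y x) atBot (nhds 0))
    (hlim2 : Tendsto (fun y => K y x * ∫ t in x..y, K x t) atTop (nhds 0))
    (hlim2' : Tendsto (fun y => K y x * ∫ t in x..y, K x t) atBot (nhds 0)) :
    -- `∫_ℝ det𝕂₁(x,y) dy = K(x,x)`, where the integral of the sign term
    -- `(1/2)·sgn(x−y)·∂₁K(x,y)` is understood as the sum of the improper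
    -- integrals over `(−∞, x]` and `[x, ∞)`.
    ∃ Am Ap : ℝ,
      Tendsto (fun a : ℝ =>
          ∫ y in a..x, (1/2) * Real.sign (x - y) * deriv (fun t => K t y) x)
        atBot (nhds Am) ∧
      Tendsto (fun b : ℝ =>
          ∫ y in x..b, (1/2) * Real.sign (x - y) * deriv (fun t => K t y) x)
        atTop (nhds Ap) ∧
      (∫ y : ℝ, (K x y * K y x + deriv (fun t => K t y) x * ∫ t in x..y, K x t))
          + (Am + Ap) = K x x := by
  have hd := hasDerivAt_neg_left_of_skew hK hskew x
  have hdc := continuous_deriv_left_of_skew hK hskew x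
  have hbot := tendsto_integral_sign_sub_mul_atBot x hd hdc hlim1'.neg
  have htop := tendsto_integral_sign_sub_mul_atTop x hd hdc hlim1.neg
  simp_rw [mul_assoc, intervalIntegral.integral_const_mul]
  refine ⟨_, _, hbot.const_mul (1 / 2), htop.const_mul (1 / 2), ?_⟩
  rw [integral_add hint1 hint2,
    integral_deriv_left_mul_primitive_of_skew hK hskew hint1 hint2 hlim2 hlim2', hproj]
  ring
end

section
/- Let K : ℝ × ℝ → ℝ be continuously differentiable with ∂₁K(x,y) = −∂₁K(y,x) for all x, y. Fix x ∈ ℝ and assume that the functions y ↦ K(x,y)·K(y,x) and y ↦ ∂₁K(x,y)·∫_x^y K(x,t) dt are Lebesgue integrable on ℝ and that the limits L₊ = lim_{y→+∞} K(y,x)·∫_x^y K(x,t) dt and L₋ = lim_{y→−∞} K(y,x)·∫_x^y K(x,t) dt exist. Then ∫_ℝ det𝕂₄(x,y) dy − (1/2)·K(x,x) = (1/4)·(2·Def_K(x) − (L₊ − L₋)). -/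
/-! With `F y = ∫_x^y K(x,t) dt`, the product rule and the antisymmetry of `∂₁K` give
`d/dy [K(y,x) F(y)] = K(x,y) K(y,x) - ∂₁K(x,y) F(y)`. Integrating over `ℝ` yields
`∫ K(x,y) K(y,x) dy - ∫ ∂₁K(x,y) F(y) dy = L₊ - L₋`, and the claimed identity is a linear
rearrangement of this. -/

open MeasureTheory Filter

theorem integral_deriv_mul_primitive_add_mul_eq {f g : ℝ → ℝ} {a l m : ℝ}
    (hf : Continuous f) (hg : Differentiable ℝ g)
    (hint : Integrable fun y => deriv g y * (∫ t in a..y, f t) + g y * f y)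
    (hbot : Tendsto (fun y => g y * ∫ t in a..y, f t) atBot (nhds m))
    (htop : Tendsto (fun y => g y * ∫ t in a..y, f t) atTop (nhds l)) :
    ∫ y, (deriv g y * (∫ t in a..y, f t) + g y * f y) = l - m :=
  integral_of_hasDerivAt_of_tendsto
    (fun y => (hg y).hasDerivAt.mul (hf.integral_hasStrictDerivAt a y).hasDerivAt) hint hbot htop

theorem integral_mul_swap_sub_integral_deriv_mul_primitive {K : ℝ → ℝ → ℝ} {x Lp Lm : ℝ}
    (hcont : Continuous (K x)) (hdiff : Differentiable ℝ fun t => K t x)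
    (hskew : ∀ y, deriv (fun t => K t x) y = - deriv (fun t => K t y) x)
    (hint1 : Integrable fun y => K x y * K y x)
    (hint2 : Integrable fun y => deriv (fun t => K t y) x * ∫ t in x..y, K x t)
    (hLp : Tendsto (fun y => K y x * ∫ t in x..y, K x t) atTop (nhds Lp))
    (hLm : Tendsto (fun y => K y x * ∫ t in x..y, K x t) atBot (nhds Lm)) :
    (∫ y, K x y * K y x) - ∫ y, deriv (fun t => K t y) x * ∫ t in x..y, K x t = Lp - Lm := by
  have hderiv_eq : (fun y => deriv (fun t => K t x) y * (∫ t in x..y, K x t) + K y x * K x y)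
      = fun y => K x y * K y x - deriv (fun t => K t y) x * ∫ t in x..y, K x t := by
    funext y
    rw [hskew y]
    ring
  have hftc := integral_deriv_mul_primitive_add_mul_eq hcont hdiff
    (hderiv_eq ▸ hint1.sub hint2) hLm hLp
  rw [hderiv_eq, integral_sub hint1 hint2] at hftc
  exact hftc

theorem stmt_12 (K : ℝ → ℝ → ℝ)
    (hK : ContDiff ℝ 1 fun p : ℝ × ℝ => K p.1 p.2)
    (hskew : ∀ x y : ℝ, deriv (fun t => K t y) x = - deriv (fun t => K t x) y)
    (x : ℝ)
    (hint1 : Integrable fun y => K x y * K y x)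
    (hint2 : Integrable fun y => deriv (fun t => K t y) x * ∫ t in x..y, K x t)
    (Lp Lm : ℝ)
    (hLp : Tendsto (fun y => K y x * ∫ t in x..y, K x t) atTop (nhds Lp))
    (hLm : Tendsto (fun y => K y x * ∫ t in x..y, K x t) atBot (nhds Lm)) :
    (∫ y : ℝ, (1/4) * (K x y * K y x + deriv (fun t => K t y) x * ∫ t in x..y, K x t))
        - (1/2) * K x x
      = (1/4) * (2 * ((∫ y : ℝ, K x y * K y x) - K x x) - (Lp - Lm)) := by
  have hcont : Continuous (K x) :=
    hK.continuous.comp (continuous_const.prodMk continuous_id)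
  have hdiff : Differentiable ℝ fun t => K t x :=
    (hK.differentiable one_ne_zero).comp (differentiable_id.prodMk (differentiable_const x))
  have hboundary := integral_mul_swap_sub_integral_deriv_mul_primitive hcont hdiff
    (fun y => hskew y x) hint1 hint2 hLp hLm
  rw [integral_const_mul, integral_add hint1 hint2]
  linarith
end

section
/- Let K : ℝ × ℝ → ℝ be continuously differentiable with ∂₁K(x,y) = −∂₁K(y,x) for all x, y. Fix x ∈ ℝ and assume that the functions y ↦ K(x,y)·K(y,x) and y ↦ ∂₁K(x,y)·∫_x^y K(x,t) dt are Lebesgue integrable on ℝ, that K(y,x) → 0 as y → ±∞, and that the limits L₊ = lim_{y→+∞} K(y,x)·∫_x^y K(x,t) dt and L₋ = lim_{y→−∞} K(y,x)·∫_x^y K(x,t) dt exist. Then ∫_ℝ det𝕂₁(x,y) dy − K(x,x) = 2·Def_K(x) − (L₊ − L₋), the integral of the sign term being understood as the sum of the improper integrals over (−∞, x] and [x, ∞). -/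
/-!
Write `g y = K(y,x)` and `F y = ∫_x^y K(x,t) dt`. Skew-symmetry of `∂₁K` turns `∂₁K(x,y)` into
`-g'(y)`. Integrating `g' F` by parts over `ℝ` against `F' = K(x,·)` gives
`∫ ∂₁K(x,y) F(y) dy = ∫ K(x,y) K(y,x) dy - (L₊ - L₋)`, while on each half-line the sign term is
`∓ g'/2`, so by the fundamental theorem of calculus and `g → 0` each improper integral equals
`-K(x,x)/2`.
-/

open MeasureTheory Filter Set Topology

section SignTerm

variable {g g' : ℝ → ℝ} {x l : ℝ}

theorem integral_sign_sub_mul_deriv_of_le {b : ℝ} (hg : ∀ y, HasDerivAt g (g' y) y)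
    (hg' : Continuous g') (hxb : x ≤ b) :
    ∫ y in x..b, Real.sign (x - y) * g' y = g x - g b := by
  have hcongr : ∫ y in x..b, Real.sign (x - y) * g' y = ∫ y in x..b, -g' y := by
    refine intervalIntegral.integral_congr_ae (Eventually.of_forall fun y hy => ?_)
    rw [uIoc_of_le hxb] at hy
    rw [Real.sign_of_neg (by linarith [hy.1]), neg_one_mul]
  rw [hcongr, intervalIntegral.integral_neg,
    intervalIntegral.integral_eq_sub_of_hasDerivAt (fun y _ => hg y) (hg'.intervalIntegrable _ _),
    neg_sub]

theorem integral_sign_sub_mul_deriv_of_ge {a : ℝ} (hg : ∀ y, HasDerivAt g (g' y) y)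
    (hg' : Continuous g') (hax : a ≤ x) :
    ∫ y in a..x, Real.sign (x - y) * g' y = g x - g a := by
  have hcongr : ∫ y in a..x, Real.sign (x - y) * g' y = ∫ y in a..x, g' y := by
    refine intervalIntegral.integral_congr_ae ?_
    filter_upwards [compl_mem_ae_iff.2 (measure_singleton x)] with y (hyx : y ≠ x) hy
    rw [uIoc_of_le hax] at hy
    rw [Real.sign_of_pos (sub_pos.2 (lt_of_le_of_ne hy.2 hyx)), one_mul]
  rw [hcongr,
    intervalIntegral.integral_eq_sub_of_hasDerivAt (fun y _ => hg y) (hg'.intervalIntegrable _ _)]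

theorem tendsto_integral_sign_sub_mul_deriv_atTop (hg : ∀ y, HasDerivAt g (g' y) y)
    (hg' : Continuous g') (hlim : Tendsto g atTop (𝓝 l)) :
    Tendsto (fun b => ∫ y in x..b, Real.sign (x - y) * g' y) atTop (𝓝 (g x - l)) := by
  refine (tendsto_const_nhds.sub hlim).congr' ?_
  filter_upwards [Ici_mem_atTop x] with b hxb
  exact (integral_sign_sub_mul_deriv_of_le hg hg' hxb).symm

theorem tendsto_integral_sign_sub_mul_deriv_atBot (hg : ∀ y, HasDerivAt g (g' y) y)
    (hg' : Continuous g') (hlim : Tendsto g atBot (𝓝 l)) :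
    Tendsto (fun a => ∫ y in a..x, Real.sign (x - y) * g' y) atBot (𝓝 (g x - l)) := by
  refine (tendsto_const_nhds.sub hlim).congr' ?_
  filter_upwards [Iic_mem_atBot x] with a hax
  exact (integral_sign_sub_mul_deriv_of_ge hg hg' hax).symm

end SignTerm

theorem integral_deriv_mul_primitive {g g' k : ℝ → ℝ} {x Lp Lm : ℝ}
    (hg : ∀ y, HasDerivAt g (g' y) y) (hk : Continuous k)
    (hgk : Integrable fun y => g y * k y)
    (hg'F : Integrable fun y => g' y * ∫ t in x..y, k t)
    (hLp : Tendsto (fun y => g y * ∫ t in x..y, k t) atTop (𝓝 Lp))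
    (hLm : Tendsto (fun y => g y * ∫ t in x..y, k t) atBot (𝓝 Lm)) :
    ∫ y, g' y * ∫ t in x..y, k t = Lp - Lm - ∫ y, g y * k y := by
  have hF : ∀ y, HasDerivAt (fun y => ∫ t in x..y, k t) (k y) y := fun y =>
    intervalIntegral.integral_hasDerivAt_right (hk.intervalIntegrable _ _)
      (hk.stronglyMeasurableAtFilter _ _) hk.continuousAt
  rw [integral_mul_deriv_eq_deriv_mul (fun y _ => hg y) (fun y _ => hF y) hgk hg'F hLm hLp]
  ring

theorem stmt_13 (K : ℝ → ℝ → ℝ)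
    (hK : ContDiff ℝ 1 fun p : ℝ × ℝ => K p.1 p.2)
    (hskew : ∀ x y : ℝ, deriv (fun t => K t y) x = - deriv (fun t => K t x) y)
    (x : ℝ)
    (hint1 : Integrable fun y => K x y * K y x)
    (hint2 : Integrable fun y => deriv (fun t => K t y) x * ∫ t in x..y, K x t)
    (hlim1 : Tendsto (fun y => K y x) atTop (nhds 0))
    (hlim1' : Tendsto (fun y => K y x) atBot (nhds 0))
    (Lp Lm : ℝ)
    (hLp : Tendsto (fun y => K y x * ∫ t in x..y, K x t) atTop (nhds Lp))
    (hLm : Tendsto (fun y => K y x * ∫ t in x..y, K x t) atBot (nhds Lm)) :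
    -- `∫_ℝ det𝕂₁(x,y) dy − K(x,x) = 2·Def_K(x) − (L₊ − L₋)`, where the integral of
    -- the sign term `(1/2)·sgn(x−y)·∂₁K(x,y)` is understood as the sum of the
    -- improper integrals over `(−∞, x]` and `[x, ∞)`, and
    -- `Def_K(x) = ∫_ℝ K(x,y)·K(y,x) dy − K(x,x)`.
    ∃ Am Ap : ℝ,
      Tendsto (fun a : ℝ =>
          ∫ y in a..x, (1/2) * Real.sign (x - y) * deriv (fun t => K t y) x)
        atBot (nhds Am) ∧
      Tendsto (fun b : ℝ =>
          ∫ y in x..b, (1/2) * Real.sign (x - y) * deriv (fun t => K t y) x)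
        atTop (nhds Ap) ∧
      ((∫ y : ℝ, (K x y * K y x + deriv (fun t => K t y) x * ∫ t in x..y, K x t))
          + (Am + Ap)) - K x x
        = 2 * ((∫ y : ℝ, K x y * K y x) - K x x) - (Lp - Lm) := by
  set g : ℝ → ℝ := fun y => K y x
  have hg : ContDiff ℝ 1 g := hK.comp (contDiff_id.prodMk contDiff_const)
  have hg_deriv : ∀ y, HasDerivAt g (deriv g y) y := fun y =>
    (hg.differentiable one_ne_zero y).hasDerivAt
  have hg'_cont : Continuous (deriv g) := hg.continuous_deriv le_rfl
  have hKx : Continuous fun t => K x t := hK.continuous.comp (continuous_const.prodMk continuous_id)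
  have hsign : ∀ y, (1/2) * Real.sign (x - y) * deriv (fun t => K t y) x
      = -(1/2) * (Real.sign (x - y) * deriv g y) := fun y => by rw [hskew x y]; ring
  have hparts : ∫ y, deriv (fun t => K t y) x * ∫ t in x..y, K x t
      = (∫ y, K x y * K y x) - (Lp - Lm) := by
    simp only [hskew x, neg_mul, integral_neg]
    rw [integral_deriv_mul_primitive hg_deriv hKx (by simpa only [mul_comm] using hint1)
      (by simpa only [g, hskew x, neg_mul, Pi.neg_def, neg_neg] using hint2.neg) hLp hLm]
    simp only [g, mul_comm (K _ x)]
    ring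
  refine ⟨-(1/2) * K x x, -(1/2) * K x x, ?_, ?_, ?_⟩
  · simp only [hsign, intervalIntegral.integral_const_mul]
    simpa using (tendsto_integral_sign_sub_mul_deriv_atBot hg_deriv hg'_cont hlim1').const_mul
      (-(1/2) : ℝ)
  · simp only [hsign, intervalIntegral.integral_const_mul]
    simpa using (tendsto_integral_sign_sub_mul_deriv_atTop hg_deriv hg'_cont hlim1).const_mul
      (-(1/2) : ℝ)
  · rw [integral_add hint1 hint2, hparts]
    ring
end

section
/- For every R > 0, every C > 0, and every positive integer n, there exists a real-valued Schwartz function φ on ℝ such that |φ(x)| ≤ 1 for all x ∈ ℝ, |φ(x) − 1| ≤ 1/n for all x with |x| ≤ R, and C·∫_ℝ |φ̂(λ)|²·|λ| dλ ≤ 1/n, where φ̂(λ) = ∫_ℝ φ(x)·e^{−2πiλx} dx is the Fourier transform of φ. -/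
/-!
The Gaussian `g_T x = exp (-π x² / T²)` tends to `1` locally uniformly as `T → ∞`, and its
Fourier transform `T exp (-π T² λ²)` satisfies `∫ |ĝ_T λ|² |λ| dλ = 1 / (2π)` independently
of `T`. So a single Gaussian cannot work, but the mean of `M` of them at the dyadic widths
`T_k = 2ᵏ T_0` can: it still approximates `1` on `[-R, R]` once `T_0 ≫ R`, while the cross terms
`∫ ĝ_{T_j} ĝ_{T_k} |λ| dλ = T_j T_k / (π (T_j² + T_k²))` decay geometrically in `|j - k|`,
so the weighted energy of the mean is `O(1 / M)`.
-/

open MeasureTheory Finset Polynomial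
open scoped Real SchwartzMap Complex BigOperators

lemma exists_iteratedDeriv_exp_neg_mul_sq_eq (b : ℝ) (n : ℕ) :
    ∃ p : ℝ[X], iteratedDeriv n (fun x => rexp (-b * x ^ 2)) =
      fun x => p.eval x * rexp (-b * x ^ 2) := by
  induction n with
  | zero => exact ⟨1, by simp⟩
  | succ n ih =>
    obtain ⟨p, hp⟩ := ih
    refine ⟨derivative p - C (2 * b) * X * p, funext fun x => ?_⟩
    have hexp : HasDerivAt (fun x => rexp (-b * x ^ 2))
        (rexp (-b * x ^ 2) * (-b * (2 * x))) x := by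
      simpa using ((hasDerivAt_pow 2 x).const_mul (-b)).exp
    rw [iteratedDeriv_succ, hp,
      ((p.hasDerivAt x).mul hexp).deriv (f := fun x => p.eval x * rexp (-b * x ^ 2))]
    simp only [eval_sub, eval_mul, eval_C, eval_X]
    ring

lemma exp_neg_mul_sq_le_one {b : ℝ} (hb : 0 ≤ b) (x : ℝ) : rexp (-b * x ^ 2) ≤ 1 :=
  Real.exp_le_one_iff.2 (by nlinarith [sq_nonneg x])

lemma one_sub_mul_sq_le_exp_neg_mul_sq (b x : ℝ) : 1 - b * x ^ 2 ≤ rexp (-b * x ^ 2) := by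
  linarith [Real.add_one_le_exp (-b * x ^ 2)]

lemma sq_pow_mul_exp_neg_mul_sq_le {b : ℝ} (hb : 0 < b) (m : ℕ) (x : ℝ) :
    (x ^ 2) ^ m * rexp (-b * x ^ 2) ≤ m.factorial / b ^ m := by
  have h := Real.pow_div_factorial_le_exp (x := b * x ^ 2) (by positivity) m
  rw [div_le_iff₀ (by positivity), mul_pow] at h
  rw [le_div_iff₀ (by positivity), neg_mul, Real.exp_neg]
  calc (x ^ 2) ^ m * (rexp (b * x ^ 2))⁻¹ * b ^ m
      = b ^ m * (x ^ 2) ^ m * (rexp (b * x ^ 2))⁻¹ := by ring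
    _ ≤ rexp (b * x ^ 2) * m.factorial * (rexp (b * x ^ 2))⁻¹ := by gcongr
    _ = m.factorial := by field_simp

lemma abs_pow_mul_exp_neg_mul_sq_le {b : ℝ} (hb : 0 < b) (m : ℕ) (x : ℝ) :
    |x| ^ m * rexp (-b * x ^ 2) ≤ 1 + m.factorial / b ^ m := by
  have hpow : |x| ^ m ≤ 1 + (x ^ 2) ^ m := by
    rcases le_total |x| 1 with h | h
    · linarith [pow_le_one₀ (abs_nonneg x) h (n := m), pow_nonneg (sq_nonneg x) m]
    · rw [← sq_abs x]
      linarith [pow_le_pow_left₀ (abs_nonneg x) (by nlinarith : |x| ≤ |x| ^ 2) m]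
  calc |x| ^ m * rexp (-b * x ^ 2) ≤ (1 + (x ^ 2) ^ m) * rexp (-b * x ^ 2) := by gcongr
    _ = rexp (-b * x ^ 2) + (x ^ 2) ^ m * rexp (-b * x ^ 2) := by ring
    _ ≤ 1 + m.factorial / b ^ m :=
      add_le_add (exp_neg_mul_sq_le_one hb.le x) (sq_pow_mul_exp_neg_mul_sq_le hb m x)

lemma Polynomial.exists_abs_eval_mul_exp_neg_mul_sq_le {b : ℝ} (hb : 0 < b) (p : ℝ[X]) :
    ∃ K, ∀ x, |p.eval x| * rexp (-b * x ^ 2) ≤ K := by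
  induction p using Polynomial.induction_on' with
  | add p q hp hq =>
    obtain ⟨Kp, hKp⟩ := hp
    obtain ⟨Kq, hKq⟩ := hq
    refine ⟨Kp + Kq, fun x => ?_⟩
    calc |(p + q).eval x| * rexp (-b * x ^ 2)
        ≤ (|p.eval x| + |q.eval x|) * rexp (-b * x ^ 2) := by
          rw [eval_add]; gcongr; exact abs_add_le _ _
      _ ≤ Kp + Kq := by linarith [hKp x, hKq x]
  | monomial m c =>
    refine ⟨|c| * (1 + m.factorial / b ^ m), fun x => ?_⟩
    rw [eval_monomial, abs_mul, abs_pow, mul_assoc]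
    exact mul_le_mul_of_nonneg_left (abs_pow_mul_exp_neg_mul_sq_le hb m x) (abs_nonneg c)

noncomputable def gaussianSchwartz {b : ℝ} (hb : 0 < b) : 𝓢(ℝ, ℝ) where
  toFun x := rexp (-b * x ^ 2)
  smooth' := by fun_prop
  decay' k n := by
    obtain ⟨p, hp⟩ := exists_iteratedDeriv_exp_neg_mul_sq_eq b n
    obtain ⟨K, hK⟩ := (X ^ k * p).exists_abs_eval_mul_exp_neg_mul_sq_le hb
    refine ⟨K, fun x => ?_⟩
    rw [norm_iteratedFDeriv_eq_norm_iteratedDeriv, hp, Real.norm_eq_abs, Real.norm_eq_abs,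
      abs_mul, abs_of_pos (Real.exp_pos _), ← mul_assoc, ← abs_pow, ← abs_mul]
    simpa using hK x

@[simp]
lemma gaussianSchwartz_apply {b : ℝ} (hb : 0 < b) (x : ℝ) :
    gaussianSchwartz hb x = rexp (-b * x ^ 2) := rfl

lemma integrable_exp_neg_mul_sq_mul_cexp {b : ℝ} (hb : 0 < b) (lam : ℝ) :
    Integrable fun x : ℝ => (rexp (-b * x ^ 2) : ℂ) * cexp (-2 * π * Complex.I * lam * x) := by
  refine (integrable_cexp_quadratic (b := b) (by simpa using hb) (-2 * π * Complex.I * lam) 0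
    ).congr (.of_forall fun x => ?_)
  simp only [add_zero, Complex.exp_add, Complex.ofReal_exp]
  push_cast
  ring_nf

lemma integral_exp_neg_pi_div_sq_mul_cexp {T : ℝ} (hT : 0 < T) (lam : ℝ) :
    ∫ x : ℝ, (rexp (-(π / T ^ 2) * x ^ 2) : ℂ) * cexp (-2 * π * Complex.I * lam * x) =
      (T * rexp (-(π * T ^ 2) * lam ^ 2) : ℝ) := by
  have hb : 0 < ((π / T ^ 2 : ℝ) : ℂ).re := by rw [Complex.ofReal_re]; positivity
  have hsqrt : ((π : ℂ) / (π / T ^ 2 : ℝ)) ^ (1 / 2 : ℂ) = T := by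
    rw [← Complex.ofReal_div, show (1 / 2 : ℂ) = ((1 / 2 : ℝ) : ℂ) by norm_num,
      ← Complex.ofReal_cpow (by positivity), ← Real.sqrt_eq_rpow,
      div_div_cancel₀ Real.pi_ne_zero, Real.sqrt_sq hT.le]
  calc ∫ x : ℝ, (rexp (-(π / T ^ 2) * x ^ 2) : ℂ) * cexp (-2 * π * Complex.I * lam * x)
      = ∫ x : ℝ,
          cexp (Complex.I * (-2 * π * lam) * x) * cexp (-(π / T ^ 2 : ℝ) * x ^ 2) := by
        congr 1; ext x; push_cast; ring_nf
    _ = _ := by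
        rw [fourierIntegral_gaussian hb, hsqrt]
        push_cast
        congr 2
        field_simp
        ring

lemma integrable_exp_neg_mul_sq_mul_abs {a : ℝ} (ha : 0 < a) :
    Integrable fun lam : ℝ => rexp (-a * lam ^ 2) * |lam| :=
  (integrable_mul_exp_neg_mul_sq ha).norm.congr <| .of_forall fun lam => by simp [mul_comm]

lemma integral_exp_neg_mul_sq_mul_abs {a : ℝ} (ha : 0 < a) :
    ∫ lam : ℝ, rexp (-a * lam ^ 2) * |lam| = a⁻¹ := by
  have hIoi : ∫ u in Set.Ioi (0 : ℝ), rexp (-a * u ^ 2) * u = (2 * a)⁻¹ := by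
    have h := integral_mul_cexp_neg_mul_sq (b := a) (by simpa using ha)
    rw [← Complex.ofReal_ofNat, ← Complex.ofReal_mul, ← Complex.ofReal_inv] at h
    rw [← Complex.ofReal_inj, ← h, ← integral_complex_ofReal]
    congr 1; ext u; push_cast; ring
  calc ∫ lam : ℝ, rexp (-a * lam ^ 2) * |lam|
      = ∫ lam : ℝ, (fun u => rexp (-a * u ^ 2) * u) |lam| := by simp only [sq_abs]
    _ = a⁻¹ := by
        rw [_root_.integral_comp_abs (f := fun u => rexp (-a * u ^ 2) * u), hIoi]
        field_simp

noncomputable def gaussianSum {ι : Type*} (s : Finset ι) (c : ι → ℝ) {T : ι → ℝ}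
    (hT : ∀ i, 0 < T i) : 𝓢(ℝ, ℝ) :=
  ∑ i ∈ s, c i • gaussianSchwartz (b := π / T i ^ 2) (by have := hT i; positivity)

section gaussianSum

variable {ι : Type*} (s : Finset ι) (c : ι → ℝ) {T : ι → ℝ}

lemma gaussianSum_apply (hT : ∀ i, 0 < T i) (x : ℝ) :
    gaussianSum s c hT x = ∑ i ∈ s, c i * rexp (-(π / T i ^ 2) * x ^ 2) := by
  simp [gaussianSum]

lemma integral_gaussianSum_mul_cexp (hT : ∀ i, 0 < T i) (lam : ℝ) :
    ∫ x : ℝ, (gaussianSum s c hT x : ℂ) * cexp (-2 * π * Complex.I * lam * x) =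
      (∑ i ∈ s, c i * (T i * rexp (-(π * T i ^ 2) * lam ^ 2)) : ℝ) := by
  have hb i : 0 < π / T i ^ 2 := by have := hT i; positivity
  simp_rw [gaussianSum_apply, Complex.ofReal_sum, sum_mul, Complex.ofReal_mul]
  rw [integral_finsetSum _ fun i _ => by
    simpa only [mul_assoc] using
      (integrable_exp_neg_mul_sq_mul_cexp (hb i) lam).const_mul (c i : ℂ)]
  refine sum_congr rfl fun i _ => ?_
  simp_rw [mul_assoc (c i : ℂ)]
  rw [integral_const_mul, integral_exp_neg_pi_div_sq_mul_cexp (hT i), Complex.ofReal_mul]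

lemma integral_sq_sum_gaussian_mul_abs (hT : ∀ i ∈ s, T i ≠ 0) :
    ∫ lam : ℝ, (∑ i ∈ s, c i * (T i * rexp (-(π * T i ^ 2) * lam ^ 2))) ^ 2 * |lam| =
      ∑ i ∈ s, ∑ j ∈ s, c i * c j * (T i * T j / (T i ^ 2 + T j ^ 2)) / π := by
  have ha i (hi : i ∈ s) j (hj : j ∈ s) : 0 < π * (T i ^ 2 + T j ^ 2) := by
    have := hT i hi; have := hT j hj; positivity
  have hexp i j (lam : ℝ) :
      rexp (-(π * T i ^ 2) * lam ^ 2) * rexp (-(π * T j ^ 2) * lam ^ 2) =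
        rexp (-(π * (T i ^ 2 + T j ^ 2)) * lam ^ 2) := by
    rw [← Real.exp_add]; ring_nf
  have hint i (hi : i ∈ s) j (hj : j ∈ s) : Integrable fun lam : ℝ =>
      c i * c j * (T i * T j) * (rexp (-(π * (T i ^ 2 + T j ^ 2)) * lam ^ 2) * |lam|) :=
    (integrable_exp_neg_mul_sq_mul_abs (ha i hi j hj)).const_mul _
  calc ∫ lam : ℝ, (∑ i ∈ s, c i * (T i * rexp (-(π * T i ^ 2) * lam ^ 2))) ^ 2 * |lam|
      = ∫ lam : ℝ, ∑ i ∈ s, ∑ j ∈ s,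
          c i * c j * (T i * T j) * (rexp (-(π * (T i ^ 2 + T j ^ 2)) * lam ^ 2) * |lam|) := by
        congr 1; ext lam
        rw [sq, sum_mul_sum, sum_mul]
        refine sum_congr rfl fun i _ => ?_
        rw [sum_mul]
        refine sum_congr rfl fun j _ => ?_
        rw [← hexp]; ring
    _ = _ := by
        rw [integral_finsetSum _ fun i hi => integrable_finsetSum _ fun j hj => hint i hi j hj]
        refine sum_congr rfl fun i hi => ?_
        rw [integral_finsetSum _ fun j hj => hint i hi j hj]
        refine sum_congr rfl fun j hj => ?_
        rw [integral_const_mul, integral_exp_neg_mul_sq_mul_abs (ha i hi j hj), mul_inv]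
        ring

lemma integral_norm_fourier_gaussianSum_sq_mul_abs (hT : ∀ i, 0 < T i) :
    ∫ lam : ℝ, ‖∫ x : ℝ, (gaussianSum s c hT x : ℂ) * cexp (-2 * π * Complex.I * lam * x)‖ ^ 2
        * |lam| = ∑ i ∈ s, ∑ j ∈ s, c i * c j * (T i * T j / (T i ^ 2 + T j ^ 2)) / π := by
  simp_rw [integral_gaussianSum_mul_cexp, Complex.norm_real, Real.norm_eq_abs, sq_abs]
  exact integral_sq_sum_gaussian_mul_abs s c fun i _ => (hT i).ne'

end gaussianSum

lemma mul_div_sq_add_sq_le_div {a b : ℝ} (ha : 0 ≤ a) (hb : 0 < b) :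
    a * b / (a ^ 2 + b ^ 2) ≤ a / b :=
  calc a * b / (a ^ 2 + b ^ 2) ≤ a * b / b ^ 2 := by gcongr; nlinarith
    _ = a / b := by field_simp

lemma sum_dyadic_mul_div_sq_add_sq_le {A : ℝ} (hA : 0 < A) {j M : ℕ} (hj : j < M) :
    ∑ k ∈ range M, A * 2 ^ j * (A * 2 ^ k) / ((A * 2 ^ j) ^ 2 + (A * 2 ^ k) ^ 2) ≤ 3 := by
  have hratio {i l : ℕ} (h : i ≤ l) : A * 2 ^ i / (A * 2 ^ l) = (1 / 2) ^ (l - i) := by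
    rw [← Nat.sub_add_cancel h, pow_add]; field_simp; simp
  set f : ℕ → ℝ := fun k => A * 2 ^ j * (A * 2 ^ k) / ((A * 2 ^ j) ^ 2 + (A * 2 ^ k) ^ 2)
  have hlow : ∑ k ∈ range (j + 1), f k ≤ 2 :=
    calc _ ≤ ∑ k ∈ range (j + 1), (1 / 2 : ℝ) ^ (j - k) := by
          refine sum_le_sum fun k hk => ?_
          have h := mul_div_sq_add_sq_le_div (a := A * 2 ^ k) (b := A * 2 ^ j) (by positivity)
            (by positivity)
          rwa [mul_comm, add_comm, hratio (Nat.lt_succ_iff.1 (mem_range.1 hk))] at h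
      _ ≤ 2 := by
          rw [← sum_range_reflect]
          refine (sum_congr rfl fun k hk => ?_).trans_le (sum_geometric_two_le (j + 1))
          rw [show j - (j + 1 - 1 - k) = k by have := mem_range.1 hk; omega]
  have hhigh : ∑ k ∈ Ico (j + 1) M, f k ≤ 1 :=
    calc _ ≤ ∑ k ∈ Ico (j + 1) M, (1 / 2 : ℝ) ^ (k - j) := by
          refine sum_le_sum fun k hk => ?_
          exact (mul_div_sq_add_sq_le_div (by positivity) (by positivity)).trans_eq
            (hratio (by have := (mem_Ico.1 hk).1; omega))
      _ = 1 / 2 * ∑ i ∈ range (M - (j + 1)), (1 / 2 : ℝ) ^ i := by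
          rw [sum_Ico_eq_sum_range, mul_sum]
          refine sum_congr rfl fun i _ => ?_
          rw [show j + 1 + i - j = i + 1 by omega, pow_succ]; ring
      _ ≤ 1 := by linarith [sum_geometric_two_le (M - (j + 1))]
  rw [← sum_range_add_sum_Ico _ hj]
  linarith

noncomputable def dyadicGaussianMean {A : ℝ} (hA : 0 < A) (M : ℕ) : 𝓢(ℝ, ℝ) :=
  gaussianSum (range M) (fun _ => (M : ℝ)⁻¹) (T := fun k => A * 2 ^ k) fun _ => by positivity

section dyadicGaussianMean

variable {A : ℝ} (hA : 0 < A) {M : ℕ}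

lemma dyadicGaussianMean_apply (x : ℝ) :
    dyadicGaussianMean hA M x = 𝔼 k ∈ range M, rexp (-(π / (A * 2 ^ k) ^ 2) * x ^ 2) := by
  rw [dyadicGaussianMean, gaussianSum_apply, expect_eq_sum_div_card, card_range, sum_div]
  simp_rw [inv_mul_eq_div]

lemma abs_dyadicGaussianMean_le_one (hM : 0 < M) (x : ℝ) :
    |dyadicGaussianMean hA M x| ≤ 1 := by
  rw [dyadicGaussianMean_apply, abs_le]
  exact ⟨le_expect (nonempty_range_iff.2 hM.ne') fun k _ => by
      linarith [Real.exp_pos (-(π / (A * 2 ^ k) ^ 2) * x ^ 2)],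
    expect_le (nonempty_range_iff.2 hM.ne') fun k _ => exp_neg_mul_sq_le_one (by positivity) x⟩

lemma abs_dyadicGaussianMean_sub_one_le (hM : 0 < M) (x : ℝ) :
    |dyadicGaussianMean hA M x - 1| ≤ π / A ^ 2 * x ^ 2 := by
  have hwidth k : π / (A * 2 ^ k) ^ 2 * x ^ 2 ≤ π / A ^ 2 * x ^ 2 := by
    gcongr
    exact le_mul_of_one_le_right hA.le (one_le_pow₀ one_le_two)
  have hle := expect_le (nonempty_range_iff.2 hM.ne') fun k _ =>
    exp_neg_mul_sq_le_one (b := π / (A * 2 ^ k) ^ 2) (by positivity) x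
  have hge := le_expect (nonempty_range_iff.2 hM.ne') fun k _ =>
    (sub_le_sub_left (hwidth k) 1).trans (one_sub_mul_sq_le_exp_neg_mul_sq _ x)
  rw [dyadicGaussianMean_apply, abs_sub_comm, abs_le]
  constructor <;> linarith [sq_nonneg x, Real.pi_pos, hA]

lemma integral_norm_fourier_dyadicGaussianMean_sq_mul_abs_le (hM : 0 < M) :
    ∫ lam : ℝ,
        ‖∫ x : ℝ, (dyadicGaussianMean hA M x : ℂ) * cexp (-2 * π * Complex.I * lam * x)‖ ^ 2
          * |lam| ≤ 1 / M := by
  have hrows : ∑ i ∈ range M, ∑ j ∈ range M,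
      A * 2 ^ i * (A * 2 ^ j) / ((A * 2 ^ i) ^ 2 + (A * 2 ^ j) ^ 2) ≤ (M : ℝ) * 3 := by
    simpa using sum_le_sum fun i hi => sum_dyadic_mul_div_sq_add_sq_le hA (mem_range.1 hi)
  have hM' : (0 : ℝ) < M := by exact_mod_cast hM
  unfold dyadicGaussianMean
  rw [integral_norm_fourier_gaussianSum_sq_mul_abs]
  simp_rw [← sum_div, ← mul_sum]
  calc (M : ℝ)⁻¹ * (M : ℝ)⁻¹ * (∑ i ∈ range M, ∑ j ∈ range M,
        A * 2 ^ i * (A * 2 ^ j) / ((A * 2 ^ i) ^ 2 + (A * 2 ^ j) ^ 2)) / π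
      ≤ (M : ℝ)⁻¹ * (M : ℝ)⁻¹ * (M * 3) / π := by gcongr
    _ = 3 / π * (1 / M) := by field_simp
    _ ≤ 1 / M :=
      mul_le_of_le_one_left (by positivity) ((div_le_one Real.pi_pos).2 Real.pi_gt_three.le)

end dyadicGaussianMean

theorem stmt_16 (R C : ℝ) (hR : 0 < R) (hC : 0 < C) (n : ℕ) (hn : 0 < n) :
    ∃ φ : SchwartzMap ℝ ℝ,
      (∀ x : ℝ, |φ x| ≤ 1) ∧
      (∀ x : ℝ, |x| ≤ R → |φ x - 1| ≤ 1 / n) ∧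
      C * (∫ lam : ℝ,
          ‖∫ x : ℝ, (φ x : ℂ) * Complex.exp (-2 * Real.pi * Complex.I * lam * x)‖ ^ 2
            * |lam|) ≤ 1 / n := by
  have hn' : (1 : ℝ) ≤ n := by exact_mod_cast hn
  set M := n * (⌈C⌉₊ + 1) with hM
  have hM0 : 0 < M := by positivity
  have hA : 0 < 2 * R * n := by positivity
  refine ⟨dyadicGaussianMean hA M, abs_dyadicGaussianMean_le_one hA hM0, fun x hx => ?_, ?_⟩
  · have hx2 : x ^ 2 ≤ R ^ 2 := sq_le_sq' (neg_le_of_abs_le hx) (le_of_abs_le hx)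
    calc |dyadicGaussianMean hA M x - 1| ≤ π / (2 * R * n) ^ 2 * x ^ 2 :=
          abs_dyadicGaussianMean_sub_one_le hA hM0 x
      _ ≤ π / (2 * R * n) ^ 2 * R ^ 2 := by gcongr
      _ = π / 4 / n * (1 / n) := by field_simp; ring
      _ ≤ 1 / n := mul_le_of_le_one_left (by positivity) <| by
          rw [div_div, div_le_one (by positivity)]; nlinarith [Real.pi_lt_four]
  · calc C * _ ≤ C * (1 / M) := by
          gcongr; exact integral_norm_fourier_dyadicGaussianMean_sq_mul_abs_le hA hM0
      _ ≤ 1 / n := by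
          rw [mul_one_div, div_le_div_iff₀ (by positivity) (by positivity), hM]
          push_cast
          nlinarith [Nat.le_ceil C]
end

section
/- Let k be a positive integer and let n be an integer with |n| ≥ 2. Then |∫_{−k}^{k} ∫_{2nk−k}^{2nk+k} cos(π(x−y))/(8·(x−y)) dy dx| ≤ ∫_{−k}^{k} ∫_{2nk−k}^{2nk+k} 1/(4π·(x−y)²) dy dx. -/
/-!
For fixed `x` outside `[a, b]`, integrate by parts in `y`, with `-sin (π (x - y)) / π` as a
primitive of `cos (π (x - y))`. Since `b - a` is an even integer, `sin (π (x - y))` takes the same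
value at both ends, so the boundary term is that value times `∫ 1 / (8π (x - y)²)`; the remaining
integral of `sin (π (x - y)) / (8π (x - y)²)` is bounded by the same quantity. Their sum is
`∫ 1 / (4π (x - y)²)`, and integrating this bound over `x ∈ [-k, k]` gives the claim.
-/

open MeasureTheory Filter Real Set

lemma sub_ne_zero_of_notMem_uIcc {a b x y : ℝ} (hx : x ∉ uIcc a b) (hy : y ∈ uIcc a b) :
    x - y ≠ 0 :=
  sub_ne_zero.2 fun h => hx (h ▸ hy)

lemma hasDerivAt_one_div_mul_sub (c x y : ℝ) (hc : c ≠ 0) (h : x - y ≠ 0) :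
    HasDerivAt (fun y => 1 / (c * (x - y))) (1 / (c * (x - y) ^ 2)) y := by
  have hlin : HasDerivAt (fun y => c * (x - y)) (-c) y := by
    simpa using ((hasDerivAt_id y).const_sub x).const_mul c
  refine ((hasDerivAt_const y (1 : ℝ)).div hlin (mul_ne_zero hc h)).congr_deriv ?_
  field_simp
  ring

lemma intervalIntegrable_one_div_mul_sub_sq {c a b x : ℝ} (hc : c ≠ 0) (hx : x ∉ uIcc a b) :
    IntervalIntegrable (fun y => 1 / (c * (x - y) ^ 2)) volume a b :=
  (continuousOn_const.div (by fun_prop) fun y hy =>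
    mul_ne_zero hc (pow_ne_zero 2 (sub_ne_zero_of_notMem_uIcc hx hy))).intervalIntegrable

lemma integral_one_div_mul_sub_sq {c a b x : ℝ} (hc : c ≠ 0) (hx : x ∉ uIcc a b) :
    ∫ y in a..b, 1 / (c * (x - y) ^ 2) = 1 / (c * (x - b)) - 1 / (c * (x - a)) :=
  intervalIntegral.integral_eq_sub_of_hasDerivAt
    (fun y hy => hasDerivAt_one_div_mul_sub c x y hc (sub_ne_zero_of_notMem_uIcc hx hy))
    (intervalIntegrable_one_div_mul_sub_sq hc hx)

lemma continuousOn_integral_one_div_mul_sub_sq {c a b : ℝ} {s : Set ℝ} (hc : c ≠ 0)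
    (hs : ∀ x ∈ s, x ∉ uIcc a b) :
    ContinuousOn (fun x => ∫ y in a..b, 1 / (c * (x - y) ^ 2)) s := by
  refine ContinuousOn.congr (f := fun x => 1 / (c * (x - b)) - 1 / (c * (x - a))) ?_
    fun x hx => integral_one_div_mul_sub_sq hc (hs x hx)
  refine (continuousOn_const.div (by fun_prop) fun x hx => ?_).sub
    (continuousOn_const.div (by fun_prop) fun x hx => ?_)
  · exact mul_ne_zero hc (sub_ne_zero_of_notMem_uIcc (hs x hx) right_mem_uIcc)
  · exact mul_ne_zero hc (sub_ne_zero_of_notMem_uIcc (hs x hx) left_mem_uIcc)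

lemma hasDerivAt_neg_sin_div (x y : ℝ) (h : x - y ≠ 0) :
    HasDerivAt (fun y => -sin (π * (x - y)) / (8 * π * (x - y)))
      (cos (π * (x - y)) / (8 * (x - y)) - sin (π * (x - y)) / (8 * π * (x - y) ^ 2)) y := by
  have hlin : ∀ c : ℝ, HasDerivAt (fun y => c * (x - y)) (-c) y := fun c => by
    simpa using ((hasDerivAt_id y).const_sub x).const_mul c
  have hnum : HasDerivAt (fun y => -sin (π * (x - y))) (π * cos (π * (x - y))) y := by
    refine ((hasDerivAt_sin _).comp y (hlin π)).neg.congr_deriv ?_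
    ring
  refine (hnum.div (hlin (8 * π)) (mul_ne_zero (by positivity) h)).congr_deriv ?_
  field_simp

lemma integral_cos_div_eq {a b x : ℝ} (hx : x ∉ uIcc a b) :
    ∫ y in a..b, cos (π * (x - y)) / (8 * (x - y)) =
      (sin (π * (x - a)) / (8 * π * (x - a)) - sin (π * (x - b)) / (8 * π * (x - b))) +
        ∫ y in a..b, sin (π * (x - y)) / (8 * π * (x - y) ^ 2) := by
  have hne : ∀ y ∈ uIcc a b, x - y ≠ 0 := fun y hy => sub_ne_zero_of_notMem_uIcc hx hy
  have hcos : IntervalIntegrable (fun y => cos (π * (x - y)) / (8 * (x - y))) volume a b :=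
    (ContinuousOn.div (by fun_prop) (by fun_prop) fun y hy =>
      mul_ne_zero (by norm_num) (hne y hy)).intervalIntegrable
  have hsin : IntervalIntegrable (fun y => sin (π * (x - y)) / (8 * π * (x - y) ^ 2)) volume a b :=
    (ContinuousOn.div (by fun_prop) (by fun_prop) fun y hy =>
      mul_ne_zero (by positivity) (pow_ne_zero 2 (hne y hy))).intervalIntegrable
  have hftc := intervalIntegral.integral_eq_sub_of_hasDerivAt
    (fun y hy => hasDerivAt_neg_sin_div x y (hne y hy)) (hcos.sub hsin)
  rw [intervalIntegral.integral_sub hcos hsin] at hftc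
  linarith [neg_div (8 * π * (x - a)) (sin (π * (x - a))),
    neg_div (8 * π * (x - b)) (sin (π * (x - b)))]

lemma abs_integral_cos_div_le {m : ℕ} {a b x : ℝ} (hb : b = a + 2 * m) (hx : x ∉ uIcc a b) :
    |∫ y in a..b, cos (π * (x - y)) / (8 * (x - y))| ≤
      ∫ y in a..b, 1 / (4 * π * (x - y) ^ 2) := by
  have hab : a ≤ b := hb ▸ le_add_of_nonneg_right (by positivity)
  set D := ∫ y in a..b, 1 / (8 * π * (x - y) ^ 2) with hD
  have hD_nonneg : 0 ≤ D := intervalIntegral.integral_nonneg hab fun _ _ => by positivity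
  have hperiod : sin (π * (x - b)) = sin (π * (x - a)) := by
    rw [hb, show π * (x - (a + 2 * m)) = π * (x - a) - m * (2 * π) by ring,
      sin_sub_nat_mul_two_pi]
  have hboundary_eq :
      sin (π * (x - a)) / (8 * π * (x - a)) - sin (π * (x - b)) / (8 * π * (x - b)) =
        -(sin (π * (x - a)) * D) := by
    rw [hperiod, hD, integral_one_div_mul_sub_sq (by positivity) hx]
    ring
  have hboundary :
      |sin (π * (x - a)) / (8 * π * (x - a)) - sin (π * (x - b)) / (8 * π * (x - b))| ≤ D := by
    rw [hboundary_eq, abs_neg, abs_mul, abs_of_nonneg hD_nonneg]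
    exact mul_le_of_le_one_left hD_nonneg (abs_sin_le_one _)
  have hremainder : |∫ y in a..b, sin (π * (x - y)) / (8 * π * (x - y) ^ 2)| ≤ D := by
    rw [← Real.norm_eq_abs]
    refine intervalIntegral.norm_integral_le_of_norm_le hab (.of_forall fun y _ => ?_)
      (intervalIntegrable_one_div_mul_sub_sq (by positivity : 8 * π ≠ 0) hx)
    rw [Real.norm_eq_abs, abs_div, abs_of_nonneg (by positivity : 0 ≤ 8 * π * (x - y) ^ 2)]
    exact div_le_div_of_nonneg_right (abs_sin_le_one _) (by positivity)
  have htwice : ∫ y in a..b, 1 / (4 * π * (x - y) ^ 2) = 2 * D := by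
    rw [hD, integral_one_div_mul_sub_sq (by positivity) hx,
      integral_one_div_mul_sub_sq (by positivity) hx]
    field_simp
    ring
  rw [integral_cos_div_eq hx, htwice]
  exact (abs_add_le _ _).trans (by linarith)

lemma notMem_uIcc_of_two_le_abs {k x : ℝ} {n : ℤ} (hk : 0 < k) (hn : 2 ≤ |n|)
    (hx : x ∈ Icc (-k) k) : x ∉ uIcc (2 * (n : ℝ) * k - k) (2 * n * k + k) := by
  intro hmem
  rw [uIcc_of_le (by linarith)] at hmem
  have hdist : |x - 2 * n * k| ≤ k := abs_sub_le_iff.2 ⟨by linarith [hmem.2], by linarith [hmem.1]⟩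
  have hcentre : |2 * (n : ℝ) * k| ≤ 2 * k :=
    calc |2 * (n : ℝ) * k| = |x - (x - 2 * n * k)| := by ring_nf
      _ ≤ |x| + |x - 2 * n * k| := abs_sub _ _
      _ ≤ 2 * k := by linarith [abs_le.2 hx]
  have hn' : (2 : ℝ) ≤ |(n : ℝ)| := by exact_mod_cast hn
  rw [abs_mul, abs_mul, abs_two, abs_of_pos hk] at hcentre
  nlinarith

theorem stmt_17 (k : ℕ) (hk : 0 < k) (n : ℤ) (hn : 2 ≤ |n|) :
    |∫ x in (-(k:ℝ))..(k:ℝ), ∫ y in (2*(n:ℝ)*(k:ℝ) - (k:ℝ))..(2*(n:ℝ)*(k:ℝ) + (k:ℝ)),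
        Real.cos (Real.pi * (x - y)) / (8 * (x - y))| ≤
      ∫ x in (-(k:ℝ))..(k:ℝ), ∫ y in (2*(n:ℝ)*(k:ℝ) - (k:ℝ))..(2*(n:ℝ)*(k:ℝ) + (k:ℝ)),
        1 / (4 * Real.pi * (x - y) ^ 2) := by
  have hk' : (0 : ℝ) < k := by exact_mod_cast hk
  have hsep : ∀ x ∈ Icc (-(k : ℝ)) k, x ∉ uIcc (2 * (n : ℝ) * k - k) (2 * n * k + k) :=
    fun x hx => notMem_uIcc_of_two_le_abs hk' hn hx
  have hbound : ∀ x ∈ Ioc (-(k : ℝ)) k,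
      ‖∫ y in (2 * (n : ℝ) * k - k)..(2 * n * k + k), cos (π * (x - y)) / (8 * (x - y))‖ ≤
        ∫ y in (2 * (n : ℝ) * k - k)..(2 * n * k + k), 1 / (4 * π * (x - y) ^ 2) :=
    fun x hx => abs_integral_cos_div_le (m := k) (by ring) (hsep x (Ioc_subset_Icc_self hx))
  rw [← Real.norm_eq_abs]
  refine intervalIntegral.norm_integral_le_of_norm_le (by linarith) (.of_forall hbound) ?_
  refine (continuousOn_integral_one_div_mul_sub_sq (by positivity) ?_).intervalIntegrable
  rwa [uIcc_of_le (by linarith)]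
end

section
/- For every integer n ≥ 1, ∫_{−1/2}^{1/2} (cos(πx)/(8π)) · (1/(n + 1/2 − x) + 1/(n − 1/2 − x)) dx ≥ 1/(48π·(n − 1/2)). -/
set_option maxHeartbeats 1000000


open MeasureTheory Filter

theorem stmt_18 (n : ℕ) (hn : 1 ≤ n) :
    1 / (48 * Real.pi * ((n : ℝ) - 1/2)) ≤
      ∫ x in (-(1/2) : ℝ)..(1/2 : ℝ),
        (Real.cos (Real.pi * x) / (8 * Real.pi)) *
          (1 / ((n : ℝ) + 1/2 - x) + 1 / ((n : ℝ) - 1/2 - x)) := by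
  have hm : (1:ℝ) ≤ (n:ℝ) := by exact_mod_cast hn
  have hπ := Real.pi_pos
  set m : ℝ := (n:ℝ) with hmdef
  set f : ℝ → ℝ := fun x => (Real.cos (Real.pi * x) / (8 * Real.pi)) *
          (1 / (m + 1/2 - x) + 1 / (m - 1/2 - x)) with hf
  -- nonnegativity on [-1/2, 1/2]
  have hcosnn : ∀ x ∈ Set.Icc (-(1/2):ℝ) (1/2), 0 ≤ Real.cos (Real.pi * x) := by
    intro x hx
    apply Real.cos_nonneg_of_mem_Icc
    constructor
    · nlinarith [hx.1]
    · nlinarith [hx.2]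
  have hnonneg : ∀ x ∈ Set.Icc (-(1/2):ℝ) (1/2), 0 ≤ f x := by
    intro x hx
    have h1 : (0:ℝ) ≤ 1 / (m + 1/2 - x) := by
      apply one_div_nonneg.2; nlinarith [hx.2]
    have h2 : (0:ℝ) ≤ 1 / (m - 1/2 - x) := by
      apply one_div_nonneg.2; nlinarith [hx.2]
    have := hcosnn x hx
    positivity
  -- boundedness on [-1/2, 1/2]
  have hbdd : ∀ x ∈ Set.Icc (-(1/2):ℝ) (1/2), ‖f x‖ ≤ 1 := by
    intro x hx
    have hc0 := hcosnn x hx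
    have hc1 : Real.cos (Real.pi * x) ≤ 1 := Real.cos_le_one _
    have h1 : 1 / (m + 1/2 - x) ≤ 1 := by
      rw [div_le_one (by nlinarith [hx.2])]
      nlinarith [hx.2]
    have h1' : (0:ℝ) ≤ 1 / (m + 1/2 - x) := by
      apply one_div_nonneg.2; nlinarith [hx.2]
    -- second factor bound: cos(πx) ≤ π (m - 1/2 - x)
    have hsin : Real.cos (Real.pi * x) ≤ Real.pi * (m - 1/2 - x) := by
      have h : Real.cos (Real.pi * x) = Real.sin (Real.pi / 2 - Real.pi * x) := by
        rw [Real.sin_pi_div_two_sub]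
      rw [h]
      have hle : Real.sin (Real.pi / 2 - Real.pi * x) ≤ Real.pi / 2 - Real.pi * x :=
        Real.sin_le (by nlinarith [hx.2])
      nlinarith [hx.2, Real.sin_nonneg_of_nonneg_of_le_pi (x := Real.pi / 2 - Real.pi * x)
        (by nlinarith [hx.2]) (by nlinarith [hx.1])]
    have h2 : Real.cos (Real.pi * x) * (1 / (m - 1/2 - x)) ≤ Real.pi := by
      rcases eq_or_lt_of_le (by nlinarith [hx.2] : (0:ℝ) ≤ m - 1/2 - x) with he | hlt
      · rw [← he]; simp; positivity
      · rw [mul_one_div, div_le_iff₀ hlt]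
        nlinarith
    have h2' : (0:ℝ) ≤ Real.cos (Real.pi * x) * (1 / (m - 1/2 - x)) := by
      have : (0:ℝ) ≤ 1 / (m - 1/2 - x) := by
        apply one_div_nonneg.2; nlinarith [hx.2]
      positivity
    have hfx : f x = (Real.cos (Real.pi * x) * (1 / (m + 1/2 - x))
        + Real.cos (Real.pi * x) * (1 / (m - 1/2 - x))) / (8 * Real.pi) := by
      simp only [hf]; ring
    rw [Real.norm_eq_abs, abs_of_nonneg (hnonneg x hx), hfx]
    rw [div_le_one (by positivity)]
    nlinarith [h2, Real.pi_gt_three, mul_le_mul hc1 h1 h1' zero_le_one]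
  -- integrability on [-1/2, 1/2]
  have hmeas : AEStronglyMeasurable f volume := by
    apply Measurable.aestronglyMeasurable
    fun_prop
  have hint : IntervalIntegrable f volume (-(1/2)) (1/2) := by
    rw [intervalIntegrable_iff_integrableOn_Icc_of_le (by norm_num)]
    apply Measure.integrableOn_of_bounded (M := 1)
    · simp
    · exact hmeas
    · rw [ae_restrict_iff' measurableSet_Icc]
      exact Filter.Eventually.of_forall hbdd
  -- split the integral
  have hsub1 : IntervalIntegrable f volume (-(1/2)) (-(1/4)) := by
    apply hint.mono_set
    rw [Set.uIcc_of_le (by norm_num), Set.uIcc_of_le (by norm_num)]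
    exact Set.Icc_subset_Icc le_rfl (by norm_num)
  have hsub2 : IntervalIntegrable f volume (-(1/4)) (1/4) := by
    apply hint.mono_set
    rw [Set.uIcc_of_le (by norm_num), Set.uIcc_of_le (by norm_num)]
    exact Set.Icc_subset_Icc (by norm_num) (by norm_num)
  have hsub3 : IntervalIntegrable f volume (1/4) (1/2) := by
    apply hint.mono_set
    rw [Set.uIcc_of_le (by norm_num), Set.uIcc_of_le (by norm_num)]
    exact Set.Icc_subset_Icc (by norm_num) le_rfl
  have hsplit : (∫ x in (-(1/2):ℝ)..(1/2:ℝ), f x)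
      = (∫ x in (-(1/2):ℝ)..(-(1/4):ℝ), f x) + (∫ x in (-(1/4):ℝ)..(1/4:ℝ), f x)
        + (∫ x in (1/4:ℝ)..(1/2:ℝ), f x) := by
    rw [← intervalIntegral.integral_add_adjacent_intervals (hsub1.trans hsub2) hsub3,
      ← intervalIntegral.integral_add_adjacent_intervals hsub1 hsub2]
  have hI1 : 0 ≤ ∫ x in (-(1/2):ℝ)..(-(1/4):ℝ), f x := by
    apply intervalIntegral.integral_nonneg (by norm_num)
    intro x hx
    exact hnonneg x ⟨hx.1, by linarith [hx.2]⟩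
  have hI3 : 0 ≤ ∫ x in (1/4:ℝ)..(1/2:ℝ), f x := by
    apply intervalIntegral.integral_nonneg (by norm_num)
    intro x hx
    exact hnonneg x ⟨by linarith [hx.1], hx.2⟩
  -- lower bound on the middle
  set c : ℝ := 1 / (16 * Real.pi * (m - 1/4)) with hc
  have hmid : ∀ x ∈ Set.Icc (-(1/4):ℝ) (1/4), c ≤ f x := by
    intro x hx
    have hx1 := hx.1
    have hx2 := hx.2
    have hcos : (1/2:ℝ) ≤ Real.cos (Real.pi * x) := by
      have hle := Real.one_sub_sq_div_two_le_cos (x := Real.pi * x)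
      have hπ4 := Real.pi_le_four
      have hp2 : Real.pi^2 ≤ 16 := by nlinarith
      have hx2' : x^2 ≤ (1/4:ℝ)^2 := sq_le_sq' (by linarith) (by linarith)
      have hsq : (Real.pi * x)^2 ≤ 1 := by
        have := mul_le_mul hp2 hx2' (sq_nonneg x) (by norm_num : (0:ℝ) ≤ 16)
        nlinarith [this]
      linarith
    have hden : (0:ℝ) < m - 1/2 - x := by nlinarith
    have h2 : 1 / (m - 1/4) ≤ 1 / (m - 1/2 - x) := by
      apply one_div_le_one_div_of_le hden
      nlinarith
    have h1 : (0:ℝ) ≤ 1 / (m + 1/2 - x) := by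
      apply one_div_nonneg.2; nlinarith
    have hfx : c ≤ (1/2) / (8 * Real.pi) * (1 / (m - 1/4)) := by
      rw [hc]
      rw [div_mul_div_comm, div_le_div_iff₀ (by nlinarith) (by nlinarith)]
      nlinarith
    calc c ≤ (1/2) / (8 * Real.pi) * (1 / (m - 1/4)) := hfx
      _ ≤ (Real.cos (Real.pi * x) / (8 * Real.pi)) * (1 / (m - 1/2 - x)) := by
          apply mul_le_mul
          · exact (div_le_div_iff_of_pos_right (by positivity)).2 hcos
          · exact h2
          · exact one_div_nonneg.2 (by nlinarith)
          · exact div_nonneg (hcosnn x ⟨by linarith, by linarith⟩) (by positivity)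
      _ ≤ f x := by
          simp only [hf]
          have : (0:ℝ) ≤ Real.cos (Real.pi * x) / (8 * Real.pi) := by positivity
          nlinarith [mul_nonneg this h1]
  have hI2 : (1/2) * c ≤ ∫ x in (-(1/4):ℝ)..(1/4:ℝ), f x := by
    have := intervalIntegral.integral_mono_on (a := (-(1/4):ℝ)) (b := (1/4:ℝ))
      (by norm_num) (intervalIntegrable_const (c := c)) hsub2 hmid
    rwa [intervalIntegral.integral_const, smul_eq_mul, show (1/4 : ℝ) - (-(1/4)) = 1/2 by norm_num]
      at this
  -- final arithmetic
  have hfinal : 1 / (48 * Real.pi * (m - 1/2)) ≤ (1/2) * c := by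
    rw [hc, mul_one_div, div_le_div_iff₀ (by nlinarith) (by nlinarith)]
    nlinarith [mul_le_mul_of_nonneg_left hm hπ.le]
  calc 1 / (48 * Real.pi * (m - 1/2)) ≤ (1/2) * c := hfinal
    _ ≤ ∫ x in (-(1/4):ℝ)..(1/4:ℝ), f x := hI2
    _ ≤ (∫ x in (-(1/2):ℝ)..(-(1/4):ℝ), f x) + (∫ x in (-(1/4):ℝ)..(1/4:ℝ), f x)
        + (∫ x in (1/4:ℝ)..(1/2:ℝ), f x) := by linarith
    _ = ∫ x in (-(1/2):ℝ)..(1/2:ℝ), f x := hsplit.symm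
end
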